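/- arXiv:2306.08873 — 9 statements merged into one kernel-verified Lean document; each statement's English description precedes it below -/
import Mathlib

section
/- With N(P,Q) defined in the context, it holds that N(P,Q) ≤ max{ (μ_1 + μ_2)(σ_1 + σ_2)/2, μ_1(σ_1 + σ_{m+1}) } · (‖P‖_F² + ‖Q‖_F²). -/
lemma chain_le (f : ℕ → ℝ) (a b : ℕ) (h : ∀ k, a ≤ k → k < b → f (k+1) ≤ f k) :
    ∀ j, j ≤ b → ∀ i, a ≤ i → i ≤ j → f j ≤ f i := by
  intro j
  induction j with
  | zero =>
    intro _ i _ hij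
    obtain rfl := Nat.le_zero.mp hij
    exact le_rfl
  | succ n ih =>
    intro hjb i hai hij
    rcases Nat.lt_or_ge i (n+1) with hlt | hge
    · exact le_trans (h n (by omega) (by omega)) (ih (by omega) i hai (by omega))
    · have : i = n + 1 := by omega
      subst this; exact le_rfl

lemma sumBound (m d : ℕ) (c : ℕ → ℕ → ℝ) (A : ℕ → ℕ → ℝ) (C : ℝ)
    (hA : ∀ j i, 0 ≤ A j i)
    (hAsym : ∀ i ∈ Finset.Icc 1 m, ∀ j ∈ Finset.Icc 1 m, A i j = A j i)
    (hAdiag : ∀ i ∈ Finset.Icc 1 m, A i i = 0)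
    (hin : ∀ i ∈ Finset.Icc 1 m, ∀ j ∈ Finset.Icc 1 m, i ≠ j → c i j + c j i ≤ 2 * C)
    (hout : ∀ i ∈ Finset.Icc 1 m, ∀ j ∈ Finset.Ioc m d, c i j ≤ C)
    (hm : 1 ≤ m) (hmd : m ≤ d) :
    ∑ i ∈ Finset.Icc 1 m, ∑ j ∈ Finset.Icc 1 d, c i j * A j i ≤
      C * ∑ j ∈ Finset.Icc 1 d, ∑ i ∈ Finset.Icc 1 m, A j i := by
  have hsplit : Finset.Icc 1 m ∪ Finset.Ioc m d = Finset.Icc 1 d :=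
    Finset.ext fun x => by simp; omega
  have hdis : Disjoint (Finset.Icc 1 m) (Finset.Ioc m d) := by
    simp [Finset.disjoint_left]
    omega
  rw [Finset.sum_comm (t := Finset.Icc 1 m)]
  rw [← hsplit]
  have hsum : ∀ (f : ℕ → ℕ → ℝ),
      ∑ i ∈ Finset.Icc 1 m, ∑ j ∈ Finset.Icc 1 m ∪ Finset.Ioc m d, f i j =
      (∑ i ∈ Finset.Icc 1 m, ∑ j ∈ Finset.Icc 1 m, f i j)
        + ∑ i ∈ Finset.Icc 1 m, ∑ j ∈ Finset.Ioc m d, f i j := by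
    intro f
    rw [← Finset.sum_add_distrib]
    exact Finset.sum_congr rfl fun i _ => Finset.sum_union hdis
  rw [hsum, hsum, mul_add]
  have part2 : ∑ i ∈ Finset.Icc 1 m, ∑ j ∈ Finset.Ioc m d, c i j * A j i ≤
      C * ∑ i ∈ Finset.Icc 1 m, ∑ j ∈ Finset.Ioc m d, A j i := by
    rw [Finset.mul_sum]
    refine Finset.sum_le_sum fun i hi => ?_
    rw [Finset.mul_sum]
    exact Finset.sum_le_sum fun j hj =>
      mul_le_mul_of_nonneg_right (hout i hi j hj) (hA j i)
  have swap1 : ∑ i ∈ Finset.Icc 1 m, ∑ j ∈ Finset.Icc 1 m, c i j * A j i =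
      ∑ i ∈ Finset.Icc 1 m, ∑ j ∈ Finset.Icc 1 m, c j i * A j i := by
    rw [Finset.sum_comm]
    exact Finset.sum_congr rfl fun i hi => Finset.sum_congr rfl fun j hj => by
      rw [hAsym i hi j hj]
  have part1 : ∑ i ∈ Finset.Icc 1 m, ∑ j ∈ Finset.Icc 1 m, c i j * A j i ≤
      C * ∑ i ∈ Finset.Icc 1 m, ∑ j ∈ Finset.Icc 1 m, A j i := by
    have h2 : (∑ i ∈ Finset.Icc 1 m, ∑ j ∈ Finset.Icc 1 m, c i j * A j i) * 2 ≤
        (C * ∑ i ∈ Finset.Icc 1 m, ∑ j ∈ Finset.Icc 1 m, A j i) * 2 := by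
      have e : (∑ i ∈ Finset.Icc 1 m, ∑ j ∈ Finset.Icc 1 m, c i j * A j i) * 2 =
          ∑ i ∈ Finset.Icc 1 m, ∑ j ∈ Finset.Icc 1 m, (c i j + c j i) * A j i := by
        rw [mul_two]
        nth_rewrite 2 [swap1]
        rw [← Finset.sum_add_distrib]
        refine Finset.sum_congr rfl fun i _ => ?_
        rw [← Finset.sum_add_distrib]
        exact Finset.sum_congr rfl fun j _ => by ring
      rw [e]
      calc ∑ i ∈ Finset.Icc 1 m, ∑ j ∈ Finset.Icc 1 m, (c i j + c j i) * A j i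
          ≤ ∑ i ∈ Finset.Icc 1 m, ∑ j ∈ Finset.Icc 1 m, 2 * C * A j i := by
            refine Finset.sum_le_sum fun i hi => Finset.sum_le_sum fun j hj => ?_
            rcases eq_or_ne i j with rfl | hne
            · rw [hAdiag i hi]; simp
            · exact mul_le_mul_of_nonneg_right (hin i hi j hj hne) (hA j i)
        _ = (C * ∑ i ∈ Finset.Icc 1 m, ∑ j ∈ Finset.Icc 1 m, A j i) * 2 := by
            simp_rw [← Finset.mul_sum]; ring
    linarith
  linarith




/-- The quantity `N(P,Q)` from the Rayleigh-quotient computation for CCA: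
`N(P,Q) = Σ_{i=1}^m μ_i ( σ_i (Σ_{j=1}^{d_x} P(j,i)² + Σ_{j=1}^{d_y} Q(j,i)²)
  − 2 Σ_{j=1}^{r} σ_j P(j,i) Q(j,i) )`. -/
noncomputable def Nval (m r dx dy : ℕ) (μ σ : ℕ → ℝ) (P Q : ℕ → ℕ → ℝ) : ℝ :=
  ∑ i ∈ Finset.Icc 1 m, μ i *
    (σ i * ((∑ j ∈ Finset.Icc 1 dx, (P j i) ^ 2) + (∑ j ∈ Finset.Icc 1 dy, (Q j i) ^ 2))
      - 2 * ∑ j ∈ Finset.Icc 1 r, σ j * P j i * Q j i)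

/-- Squared Frobenius norm of a `d × m` array. -/
noncomputable def frobSq (d m : ℕ) (P : ℕ → ℕ → ℝ) : ℝ :=
  ∑ j ∈ Finset.Icc 1 d, ∑ i ∈ Finset.Icc 1 m, (P j i) ^ 2

/-- Upper Rayleigh-quotient bound for CCA (Proposition 4.1):
`N(P,Q) ≤ max{(μ₁+μ₂)(σ₁+σ₂)/2, μ₁(σ₁+σ_{m+1})} · (‖P‖_F² + ‖Q‖_F²)`. -/
theorem stmt4 (m r dx dy : ℕ) (hm : 2 ≤ m) (hr : m + 1 ≤ r) (hdx : r ≤ dx) (hdy : r ≤ dy)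
    (μ σ : ℕ → ℝ)
    (hμ : ∀ i, 1 ≤ i → i < m → μ (i + 1) < μ i) (hμpos : 0 < μ m)
    (hσ : ∀ i, 1 ≤ i → i ≤ m → σ (i + 1) < σ i)
    (hσmono : ∀ i, m + 1 ≤ i → i < r → σ (i + 1) ≤ σ i)
    (hσnn : 0 ≤ σ r)
    (P Q : ℕ → ℕ → ℝ)
    (hP : ∀ i ∈ Finset.Icc 1 m, ∀ j ∈ Finset.Icc 1 m, P i j = -P j i)
    (hQ : ∀ i ∈ Finset.Icc 1 m, ∀ j ∈ Finset.Icc 1 m, Q i j = -Q j i) :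
    Nval m r dx dy μ σ P Q ≤
      max ((μ 1 + μ 2) * (σ 1 + σ 2) / 2) (μ 1 * (σ 1 + σ (m + 1))) *
        (frobSq dx m P + frobSq dy m Q) := by
  set C := max ((μ 1 + μ 2) * (σ 1 + σ 2) / 2) (μ 1 * (σ 1 + σ (m + 1))) with hC
  -- monotonicity facts
  have μle : ∀ i j, 1 ≤ i → i ≤ j → j ≤ m → μ j ≤ μ i := fun i j h1 h2 h3 =>
    chain_le μ 1 m (fun k hk1 hk2 => (hμ k hk1 hk2).le) j h3 i h1 h2
  have σle1 : ∀ i j, 1 ≤ i → i ≤ j → j ≤ m + 1 → σ j ≤ σ i := fun i j h1 h2 h3 =>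
    chain_le σ 1 (m+1) (fun k hk1 hk2 => (hσ k hk1 (by omega)).le) j h3 i h1 h2
  have σle2 : ∀ i j, m + 1 ≤ i → i ≤ j → j ≤ r → σ j ≤ σ i := fun i j h1 h2 h3 =>
    chain_le σ (m+1) r (fun k hk1 hk2 => hσmono k hk1 hk2) j h3 i h1 h2
  have σle : ∀ i j, 1 ≤ i → i ≤ j → j ≤ r → σ j ≤ σ i := by
    intro i j h1 h2 h3
    rcases le_or_gt j (m+1) with hj | hj
    · exact σle1 i j h1 h2 hj
    · rcases le_or_gt (m+1) i with hi | hi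
      · exact σle2 i j hi h2 h3
      · exact le_trans (σle2 (m+1) j le_rfl (by omega) h3) (σle1 i (m+1) h1 (by omega) le_rfl)
  have σnn' : ∀ j, 1 ≤ j → j ≤ r → 0 ≤ σ j := fun j h1 h2 =>
    le_trans hσnn (σle j r h1 h2 le_rfl)
  have μpos' : ∀ i, 1 ≤ i → i ≤ m → 0 < μ i := fun i h1 h2 =>
    lt_of_lt_of_le hμpos (μle i m h1 h2 le_rfl)
  -- key pairwise inequality
  have keyaux : ∀ i j, 1 ≤ i → i < j → j ≤ m →
      (μ i + μ j) * (σ i + σ j) ≤ (μ 1 + μ 2) * (σ 1 + σ 2) := by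
    intro i j h1 h2 h3
    have hμ1 : μ i ≤ μ 1 := μle 1 i le_rfl h1 (by omega)
    have hμ2 : μ j ≤ μ 2 := μle 2 j one_le_two (by omega) h3
    have hσ1 : σ i ≤ σ 1 := σle 1 i le_rfl h1 (by omega)
    have hσ2 : σ j ≤ σ 2 := σle 2 j one_le_two (by omega) (by omega)
    have hσi : 0 ≤ σ i := σnn' i h1 (by omega)
    have hσj : 0 ≤ σ j := σnn' j (by omega) (by omega)
    have hμ1p : 0 < μ 1 := μpos' 1 le_rfl (by omega)
    have hμ2p : 0 < μ 2 := μpos' 2 one_le_two hm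
    have := mul_le_mul (add_le_add hμ1 hμ2) (add_le_add hσ1 hσ2)
      (by linarith) (by linarith)
    linarith
  have key : ∀ i ∈ Finset.Icc 1 m, ∀ j ∈ Finset.Icc 1 m, i ≠ j →
      (μ i + μ j) * (σ i + σ j) ≤ 2 * C := by
    intro i hi j hj hne
    simp only [Finset.mem_Icc] at hi hj
    have h2C : (μ 1 + μ 2) * (σ 1 + σ 2) ≤ 2 * C := by
      have := le_max_left ((μ 1 + μ 2) * (σ 1 + σ 2) / 2) (μ 1 * (σ 1 + σ (m + 1)))
      rw [← hC] at this; linarith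
    rcases Nat.lt_or_ge i j with h | h
    · exact le_trans (keyaux i j hi.1 h hj.2) h2C
    · have hji : j < i := by omega
      have := keyaux j i hj.1 hji hi.2
      linarith
  -- bound for the outer range
  have hout : ∀ i, 1 ≤ i → i ≤ m → ∀ s, 0 ≤ s → s ≤ σ (m+1) → μ i * (σ i + s) ≤ C := by
    intro i h1 h2 s hs1 hs2
    have hμ1 : μ i ≤ μ 1 := μle 1 i le_rfl h1 (by omega)
    have hσ1 : σ i ≤ σ 1 := σle 1 i le_rfl h1 (by omega)
    have hμip : 0 < μ i := μpos' i h1 h2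
    have hσi : 0 ≤ σ i := σnn' i h1 (by omega)
    have hσm1 : 0 ≤ σ (m+1) := σnn' (m+1) (by omega) hr
    have hB : μ 1 * (σ 1 + σ (m + 1)) ≤ C := le_max_right _ _
    have := mul_le_mul hμ1 (add_le_add hσ1 hs2) (by linarith) (by linarith)
    linarith
  set τ : ℕ → ℝ := fun j => if j ≤ r then σ j else 0 with hτ
  -- Step 1: AM-GM on the cross terms
  have step1 : Nval m r dx dy μ σ P Q ≤
      (∑ i ∈ Finset.Icc 1 m, ∑ j ∈ Finset.Icc 1 dx, μ i * (σ i + τ j) * P j i ^ 2)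
      + ∑ i ∈ Finset.Icc 1 m, ∑ j ∈ Finset.Icc 1 dy, μ i * (σ i + τ j) * Q j i ^ 2 := by
    rw [Nval, ← Finset.sum_add_distrib]
    refine Finset.sum_le_sum fun i hi => ?_
    obtain ⟨hi1, hi2⟩ := Finset.mem_Icc.mp hi
    have hμi : 0 ≤ μ i := (μpos' i hi1 hi2).le
    have eP : ∑ j ∈ Finset.Icc 1 dx, μ i * τ j * P j i ^ 2
        = ∑ j ∈ Finset.Icc 1 r, μ i * σ j * P j i ^ 2 := by
      rw [← Finset.sum_subset (Finset.Icc_subset_Icc_right hdx) (fun j hj hj' => ?_)]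
      · refine Finset.sum_congr rfl fun j hj => ?_
        have hjr : j ≤ r := (Finset.mem_Icc.mp hj).2
        simp [hτ, hjr]
      · have : ¬ j ≤ r := by
          simp only [Finset.mem_Icc] at hj hj'; omega
        simp [hτ, this]
    have eQ : ∑ j ∈ Finset.Icc 1 dy, μ i * τ j * Q j i ^ 2
        = ∑ j ∈ Finset.Icc 1 r, μ i * σ j * Q j i ^ 2 := by
      rw [← Finset.sum_subset (Finset.Icc_subset_Icc_right hdy) (fun j hj hj' => ?_)]
      · refine Finset.sum_congr rfl fun j hj => ?_
        have hjr : j ≤ r := (Finset.mem_Icc.mp hj).2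
        simp [hτ, hjr]
      · have : ¬ j ≤ r := by
          simp only [Finset.mem_Icc] at hj hj'; omega
        simp [hτ, this]
    have e1P : ∑ j ∈ Finset.Icc 1 dx, μ i * (σ i + τ j) * P j i ^ 2
        = μ i * σ i * (∑ j ∈ Finset.Icc 1 dx, P j i ^ 2)
          + ∑ j ∈ Finset.Icc 1 r, μ i * σ j * P j i ^ 2 := by
      rw [Finset.sum_congr rfl (fun j (_ : j ∈ Finset.Icc 1 dx) =>
        show μ i * (σ i + τ j) * P j i ^ 2
            = μ i * σ i * P j i ^ 2 + μ i * τ j * P j i ^ 2 by ring),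
        Finset.sum_add_distrib, ← Finset.mul_sum, eP]
    have e1Q : ∑ j ∈ Finset.Icc 1 dy, μ i * (σ i + τ j) * Q j i ^ 2
        = μ i * σ i * (∑ j ∈ Finset.Icc 1 dy, Q j i ^ 2)
          + ∑ j ∈ Finset.Icc 1 r, μ i * σ j * Q j i ^ 2 := by
      rw [Finset.sum_congr rfl (fun j (_ : j ∈ Finset.Icc 1 dy) =>
        show μ i * (σ i + τ j) * Q j i ^ 2
            = μ i * σ i * Q j i ^ 2 + μ i * τ j * Q j i ^ 2 by ring),
        Finset.sum_add_distrib, ← Finset.mul_sum, eQ]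
    have pos : 0 ≤ ∑ j ∈ Finset.Icc 1 r, μ i * σ j * (P j i + Q j i) ^ 2 :=
      Finset.sum_nonneg fun j hj => by
        obtain ⟨hj1, hj2⟩ := Finset.mem_Icc.mp hj
        exact mul_nonneg (mul_nonneg hμi (σnn' j hj1 hj2)) (sq_nonneg _)
    have expand : ∑ j ∈ Finset.Icc 1 r, μ i * σ j * (P j i + Q j i) ^ 2
        = (∑ j ∈ Finset.Icc 1 r, μ i * σ j * P j i ^ 2)
          + (∑ j ∈ Finset.Icc 1 r, μ i * σ j * Q j i ^ 2)
          + 2 * (μ i * ∑ j ∈ Finset.Icc 1 r, σ j * P j i * Q j i) := by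
      rw [Finset.mul_sum, Finset.mul_sum, ← Finset.sum_add_distrib,
        ← Finset.sum_add_distrib]
      exact Finset.sum_congr rfl fun j _ => by ring
    rw [e1P, e1Q]
    nlinarith [expand, pos]
  -- Step 2: apply sumBound to P and Q parts
  have hPd : ∀ i ∈ Finset.Icc 1 m, P i i = 0 := fun i hi => by
    have := hP i hi i hi; linarith
  have hQd : ∀ i ∈ Finset.Icc 1 m, Q i i = 0 := fun i hi => by
    have := hQ i hi i hi; linarith
  have hin : ∀ i ∈ Finset.Icc 1 m, ∀ j ∈ Finset.Icc 1 m, i ≠ j →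
      (fun i j => μ i * (σ i + τ j)) i j + (fun i j => μ i * (σ i + τ j)) j i ≤ 2 * C := by
    intro i hi j hj hne
    obtain ⟨hi1, hi2⟩ := Finset.mem_Icc.mp hi
    obtain ⟨hj1, hj2⟩ := Finset.mem_Icc.mp hj
    have hir : i ≤ r := by omega
    have hjr : j ≤ r := by omega
    have hk := key i (Finset.mem_Icc.mpr ⟨hi1, hi2⟩) j (Finset.mem_Icc.mpr ⟨hj1, hj2⟩) hne
    have e : μ i * (σ i + σ j) + μ j * (σ j + σ i) = (μ i + μ j) * (σ i + σ j) := by ring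
    simp only [hτ, hir, hjr, if_pos]
    linarith
  have hout' : ∀ (d : ℕ), r ≤ d → ∀ i ∈ Finset.Icc 1 m, ∀ j ∈ Finset.Ioc m d,
      (fun i j => μ i * (σ i + τ j)) i j ≤ C := by
    intro d hd i hi j hj
    obtain ⟨hi1, hi2⟩ := Finset.mem_Icc.mp hi
    obtain ⟨hj1, hj2⟩ := Finset.mem_Ioc.mp hj
    have hσm1 : 0 ≤ σ (m+1) := σnn' (m+1) (by omega) hr
    show μ i * (σ i + τ j) ≤ C
    rcases le_or_gt j r with hjr | hjr
    · have h0 : τ j = σ j := by simp [hτ, hjr]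
      rw [h0]
      exact hout i hi1 hi2 (σ j) (σnn' j (by omega) hjr)
        (σle2 (m+1) j le_rfl (by omega) hjr)
    · have h0 : τ j = 0 := by simp [hτ]; omega
      rw [h0]
      exact hout i hi1 hi2 0 le_rfl hσm1
  have bP : ∑ i ∈ Finset.Icc 1 m, ∑ j ∈ Finset.Icc 1 dx, μ i * (σ i + τ j) * P j i ^ 2 ≤
      C * frobSq dx m P := by
    rw [frobSq]
    exact sumBound m dx (fun i j => μ i * (σ i + τ j)) (fun j i => P j i ^ 2) C
      (fun j i => sq_nonneg _)
      (fun i hi j hj => by show P i j ^ 2 = P j i ^ 2; rw [hP i hi j hj]; ring)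
      (fun i hi => by show P i i ^ 2 = 0; rw [hPd i hi]; ring)
      hin (hout' dx hdx) (by omega) (by omega)
  have bQ : ∑ i ∈ Finset.Icc 1 m, ∑ j ∈ Finset.Icc 1 dy, μ i * (σ i + τ j) * Q j i ^ 2 ≤
      C * frobSq dy m Q := by
    rw [frobSq]
    exact sumBound m dy (fun i j => μ i * (σ i + τ j)) (fun j i => Q j i ^ 2) C
      (fun j i => sq_nonneg _)
      (fun i hi j hj => by show Q i j ^ 2 = Q j i ^ 2; rw [hQ i hi j hj]; ring)
      (fun i hi => by show Q i i ^ 2 = 0; rw [hQd i hi]; ring)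
      hin (hout' dy hdy) (by omega) (by omega)
  calc Nval m r dx dy μ σ P Q ≤ _ := step1
    _ ≤ C * frobSq dx m P + C * frobSq dy m Q := add_le_add bP bQ
    _ = C * (frobSq dx m P + frobSq dy m Q) := by ring
end

section
/- With N(P,Q) defined in the context, it holds that N(P,Q) ≥ min{ min_{i,j ∈ {1,…,m}, i ≠ j} (μ_i − μ_j)(σ_i − σ_j)/2, μ_m(σ_m − σ_{m+1}) } · (‖P‖_F² + ‖Q‖_F²). -/
lemma step_anti {f : ℕ → ℝ} {a b : ℕ} (h : ∀ i, a ≤ i → i < b → f (i+1) ≤ f i)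
    {i j : ℕ} (hai : a ≤ i) (hij : i ≤ j) (hjb : j ≤ b) : f j ≤ f i := by
  induction j, hij using Nat.le_induction with
  | base => exact le_refl _
  | succ k hk ih => exact (h k (hai.trans hk) (by omega)).trans (ih (by omega))

lemma split3 {m r d : ℕ} (h1 : m ≤ r) (h2 : r ≤ d) (g : ℕ → ℝ) :
    ∑ j ∈ Finset.Icc 1 d, g j = ∑ j ∈ Finset.Icc 1 m, g j + ∑ j ∈ Finset.Ioc m r, g j
      + ∑ j ∈ Finset.Ioc r d, g j := by
  rw [show (1:ℕ) = 0+1 from rfl, Finset.Icc_add_one_left_eq_Ioc, Finset.Icc_add_one_left_eq_Ioc,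
    Finset.sum_Ioc_consecutive _ (Nat.zero_le m) h1,
    Finset.sum_Ioc_consecutive _ (h1.trans' (Nat.zero_le m)) h2]

lemma split2 {m r : ℕ} (h1 : m ≤ r) (g : ℕ → ℝ) :
    ∑ j ∈ Finset.Icc 1 r, g j = ∑ j ∈ Finset.Icc 1 m, g j + ∑ j ∈ Finset.Ioc m r, g j := by
  rw [show (1:ℕ) = 0+1 from rfl, Finset.Icc_add_one_left_eq_Ioc, Finset.Icc_add_one_left_eq_Ioc,
    Finset.sum_Ioc_consecutive _ (Nat.zero_le m) h1]

lemma sumT (μi σi : ℝ) (σ p q : ℕ → ℝ) (u : Finset ℕ) :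
    ∑ j ∈ u, (μi * σi * (p j ^ 2 + q j ^ 2) - 2 * μi * (σ j * (p j * q j)))
      = μi * σi * ((∑ j ∈ u, p j ^ 2) + ∑ j ∈ u, q j ^ 2)
        - 2 * μi * ∑ j ∈ u, σ j * (p j * q j) := by
  simp only [Finset.sum_sub_distrib, ← Finset.mul_sum, Finset.sum_add_distrib]

lemma perI {m r dx dy : ℕ} (hmr : m ≤ r) (hdx : r ≤ dx) (hdy : r ≤ dy)
    (μi σi : ℝ) (σ p q : ℕ → ℝ) :
    μi * (σi * ((∑ j ∈ Finset.Icc 1 dx, p j ^ 2) + ∑ j ∈ Finset.Icc 1 dy, q j ^ 2)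
      - 2 * ∑ j ∈ Finset.Icc 1 r, σ j * p j * q j)
    = (∑ j ∈ Finset.Icc 1 m, (μi * σi * (p j ^ 2 + q j ^ 2) - 2 * μi * (σ j * (p j * q j))))
      + (∑ j ∈ Finset.Ioc m r, (μi * σi * (p j ^ 2 + q j ^ 2) - 2 * μi * (σ j * (p j * q j))))
      + (∑ j ∈ Finset.Ioc r dx, μi * σi * p j ^ 2)
      + (∑ j ∈ Finset.Ioc r dy, μi * σi * q j ^ 2) := by
  rw [split3 hmr hdx, split3 hmr hdy, split2 hmr (fun j => σ j * p j * q j), sumT, sumT]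
  simp only [mul_assoc, ← Finset.mul_sum]
  ring


set_option maxHeartbeats 1200000 in
/-- Lower Rayleigh-quotient bound for CCA (Proposition 4.1):
`N(P,Q) ≥ min{ min_{i≠j∈[m]} (μ_i−μ_j)(σ_i−σ_j)/2, μ_m(σ_m−σ_{m+1}) } · (‖P‖_F² + ‖Q‖_F²)`. -/
theorem stmt5 (m r dx dy : ℕ) (hm : 2 ≤ m) (hr : m + 1 ≤ r) (hdx : r ≤ dx) (hdy : r ≤ dy)
    (μ σ : ℕ → ℝ)
    (hμ : ∀ i, 1 ≤ i → i < m → μ (i + 1) < μ i) (hμpos : 0 < μ m)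
    (hσ : ∀ i, 1 ≤ i → i ≤ m → σ (i + 1) < σ i)
    (hσmono : ∀ i, m + 1 ≤ i → i < r → σ (i + 1) ≤ σ i)
    (hσnn : 0 ≤ σ r)
    (P Q : ℕ → ℕ → ℝ)
    (hP : ∀ i ∈ Finset.Icc 1 m, ∀ j ∈ Finset.Icc 1 m, P i j = -P j i)
    (hQ : ∀ i ∈ Finset.Icc 1 m, ∀ j ∈ Finset.Icc 1 m, Q i j = -Q j i) :
    min
        (sInf {x : ℝ | ∃ i ∈ Finset.Icc 1 m, ∃ j ∈ Finset.Icc 1 m, i ≠ j ∧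
          x = (μ i - μ j) * (σ i - σ j) / 2})
        (μ m * (σ m - σ (m + 1))) *
      (frobSq dx m P + frobSq dy m Q) ≤
    Nval m r dx dy μ σ P Q := by
  have hmr : m ≤ r := by omega
  set s := Finset.Icc 1 m with hs
  have hbdd : BddBelow {x : ℝ | ∃ i ∈ Finset.Icc 1 m, ∃ j ∈ Finset.Icc 1 m, i ≠ j ∧
      x = (μ i - μ j) * (σ i - σ j) / 2} := by
    apply Set.Finite.bddBelow
    have hsub : {x : ℝ | ∃ i ∈ Finset.Icc 1 m, ∃ j ∈ Finset.Icc 1 m, i ≠ j ∧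
        x = (μ i - μ j) * (σ i - σ j) / 2} ⊆
        (fun p : ℕ × ℕ => (μ p.1 - μ p.2) * (σ p.1 - σ p.2) / 2) ''
        (((Finset.Icc 1 m ×ˢ Finset.Icc 1 m : Finset (ℕ × ℕ)) : Set (ℕ × ℕ))) := by
      rintro x ⟨i, hi, j, hj, -, rfl⟩
      exact ⟨(i, j), Finset.mem_coe.2 (Finset.mem_product.2 ⟨hi, hj⟩), rfl⟩
    exact (Set.Finite.image _ (Finset.finite_toSet _)).subset hsub
  suffices h : ∀ c : ℝ, c ≤ μ m * (σ m - σ (m + 1)) →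
      (∀ i ∈ s, ∀ j ∈ s, i ≠ j → c ≤ (μ i - μ j) * (σ i - σ j) / 2) →
      c * (frobSq dx m P + frobSq dy m Q) ≤ Nval m r dx dy μ σ P Q by
    refine h _ (min_le_right _ _) ?_
    intro i hi j hj hij
    exact (min_le_left _ _).trans (csInf_le hbdd ⟨i, hi, j, hj, hij, rfl⟩)
  intro c hc1 hc2
  -- monotonicity facts
  have hμanti : ∀ i j : ℕ, 1 ≤ i → i ≤ j → j ≤ m → μ j ≤ μ i :=
    fun i j h1 h2 h3 => step_anti (fun k hk hk' => (hμ k hk hk').le) h1 h2 h3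
  have hσanti : ∀ i j : ℕ, 1 ≤ i → i ≤ j → j ≤ m + 1 → σ j ≤ σ i :=
    fun i j h1 h2 h3 => step_anti (fun k hk hk' => (hσ k hk (by omega)).le) h1 h2 h3
  have hσanti2 : ∀ i j : ℕ, m + 1 ≤ i → i ≤ j → j ≤ r → σ j ≤ σ i :=
    fun i j h1 h2 h3 => step_anti (fun k hk hk' => hσmono k hk hk') h1 h2 h3
  have hσfull : ∀ i j : ℕ, 1 ≤ i → i ≤ j → j ≤ r → σ j ≤ σ i := by
    intro i j h1 h2 h3
    rcases le_or_gt j (m + 1) with h | h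
    · exact hσanti i j h1 h2 h
    · rcases le_or_gt i (m + 1) with h' | h'
      · exact (hσanti2 (m+1) j le_rfl (by omega) h3).trans (hσanti i (m+1) h1 h' le_rfl)
      · exact hσanti2 i j (by omega) h2 h3
  have hσnn' : ∀ j : ℕ, 1 ≤ j → j ≤ r → 0 ≤ σ j :=
    fun j h1 h2 => hσnn.trans (hσfull j r h1 h2 le_rfl)
  have hσm1nn : 0 ≤ σ (m + 1) := hσnn' (m + 1) (by omega) hr
  have hσm1 : σ (m + 1) < σ m := hσ m (by omega) le_rfl
  have hσmpos : 0 < σ m := lt_of_le_of_lt hσm1nn hσm1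
  have hμle : ∀ i ∈ s, μ m ≤ μ i := by
    intro i hi; rw [hs, Finset.mem_Icc] at hi; exact hμanti i m hi.1 hi.2 le_rfl
  have hσle : ∀ i ∈ s, σ m ≤ σ i := by
    intro i hi; rw [hs, Finset.mem_Icc] at hi; exact hσfull i m hi.1 hi.2 hmr
  have hμposi : ∀ i ∈ s, 0 < μ i := fun i hi => hμpos.trans_le (hμle i hi)
  have hσposi : ∀ i ∈ s, 0 < σ i := fun i hi => hσmpos.trans_le (hσle i hi)
  -- rewrite Nval
  have hN : Nval m r dx dy μ σ P Q =
      (∑ i ∈ s, ∑ j ∈ s, (μ i * σ i * (P j i ^ 2 + Q j i ^ 2) - 2 * μ i * (σ j * (P j i * Q j i))))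
      + (∑ i ∈ s, ∑ j ∈ Finset.Ioc m r, (μ i * σ i * (P j i ^ 2 + Q j i ^ 2) - 2 * μ i * (σ j * (P j i * Q j i))))
      + (∑ i ∈ s, ∑ j ∈ Finset.Ioc r dx, μ i * σ i * P j i ^ 2)
      + (∑ i ∈ s, ∑ j ∈ Finset.Ioc r dy, μ i * σ i * Q j i ^ 2) := by
    rw [Nval]
    rw [Finset.sum_congr rfl (fun i _ => perI hmr hdx hdy (μ i) (σ i) σ (fun j => P j i) (fun j => Q j i))]
    rw [Finset.sum_add_distrib, Finset.sum_add_distrib, Finset.sum_add_distrib]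
  -- rewrite frobSq
  have hFP : frobSq dx m P =
      (∑ i ∈ s, ∑ j ∈ s, P j i ^ 2) + (∑ i ∈ s, ∑ j ∈ Finset.Ioc m r, P j i ^ 2)
      + (∑ i ∈ s, ∑ j ∈ Finset.Ioc r dx, P j i ^ 2) := by
    rw [frobSq, Finset.sum_comm,
      Finset.sum_congr rfl (fun i _ => split3 hmr hdx (fun j => P j i ^ 2)),
      Finset.sum_add_distrib, Finset.sum_add_distrib]
  have hFQ : frobSq dy m Q =
      (∑ i ∈ s, ∑ j ∈ s, Q j i ^ 2) + (∑ i ∈ s, ∑ j ∈ Finset.Ioc m r, Q j i ^ 2)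
      + (∑ i ∈ s, ∑ j ∈ Finset.Ioc r dy, Q j i ^ 2) := by
    rw [frobSq, Finset.sum_comm,
      Finset.sum_congr rfl (fun i _ => split3 hmr hdy (fun j => Q j i ^ 2)),
      Finset.sum_add_distrib, Finset.sum_add_distrib]
  -- piece I: skew block
  have hpair : ∀ i ∈ s, ∀ j ∈ s,
      2 * (c * (P j i ^ 2 + Q j i ^ 2)) ≤
        (μ i * σ i * (P j i ^ 2 + Q j i ^ 2) - 2 * μ i * (σ j * (P j i * Q j i)))
        + (μ j * σ j * (P i j ^ 2 + Q i j ^ 2) - 2 * μ j * (σ i * (P i j * Q i j))) := by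
    intro i hi j hj
    by_cases hij : i = j
    · subst hij
      have hp0 : P i i = 0 := by have := hP i hi i hi; linarith
      have hq0 : Q i i = 0 := by have := hQ i hi i hi; linarith
      rw [hp0, hq0]; norm_num
    · have hcp := hc2 i hi j hj hij
      have hμi := hμposi i hi
      have hμj := hμposi j hj
      have hσi := hσposi i hi
      have hσj := hσposi j hj
      rw [hP i hi j hj, hQ i hi j hj]
      have key1 : 2 * c ≤ (μ i - μ j) * (σ i - σ j) := by linarith
      have key2 : 2 * c * (P j i ^ 2 + Q j i ^ 2) ≤
          (μ i - μ j) * (σ i - σ j) * (P j i ^ 2 + Q j i ^ 2) :=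
        mul_le_mul_of_nonneg_right key1 (by positivity)
      have key3 : 0 ≤ (μ i * σ j + μ j * σ i) * (P j i - Q j i) ^ 2 :=
        mul_nonneg (by positivity) (sq_nonneg _)
      nlinarith [key2, key3]
  have hI : c * (∑ i ∈ s, ∑ j ∈ s, (P j i ^ 2 + Q j i ^ 2)) ≤
      ∑ i ∈ s, ∑ j ∈ s, (μ i * σ i * (P j i ^ 2 + Q j i ^ 2) - 2 * μ i * (σ j * (P j i * Q j i))) := by
    have hsym : (∑ i ∈ s, ∑ j ∈ s, (μ j * σ j * (P i j ^ 2 + Q i j ^ 2) - 2 * μ j * (σ i * (P i j * Q i j))))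
        = ∑ i ∈ s, ∑ j ∈ s, (μ i * σ i * (P j i ^ 2 + Q j i ^ 2) - 2 * μ i * (σ j * (P j i * Q j i))) :=
      Finset.sum_comm
    have hle : ∑ i ∈ s, ∑ j ∈ s, (2 * (c * (P j i ^ 2 + Q j i ^ 2))) ≤
        ∑ i ∈ s, ∑ j ∈ s, ((μ i * σ i * (P j i ^ 2 + Q j i ^ 2) - 2 * μ i * (σ j * (P j i * Q j i)))
          + (μ j * σ j * (P i j ^ 2 + Q i j ^ 2) - 2 * μ j * (σ i * (P i j * Q i j)))) :=
      Finset.sum_le_sum (fun i hi => Finset.sum_le_sum (fun j hj => hpair i hi j hj))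
    simp only [← Finset.mul_sum] at hle
    simp only [Finset.sum_add_distrib] at hle ⊢
    rw [hsym] at hle
    linarith
  -- piece II: columns m+1..r
  have hII : c * (∑ i ∈ s, ∑ j ∈ Finset.Ioc m r, (P j i ^ 2 + Q j i ^ 2)) ≤
      ∑ i ∈ s, ∑ j ∈ Finset.Ioc m r,
        (μ i * σ i * (P j i ^ 2 + Q j i ^ 2) - 2 * μ i * (σ j * (P j i * Q j i))) := by
    rw [Finset.mul_sum]
    refine Finset.sum_le_sum (fun i hi => ?_)
    rw [Finset.mul_sum]
    refine Finset.sum_le_sum (fun j hj => ?_)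
    rw [Finset.mem_Ioc] at hj
    have hμi := hμposi i hi
    have hμm := hμle i hi
    have hσi := hσle i hi
    have hσj1 : σ j ≤ σ (m + 1) := hσfull (m + 1) j (by omega) (by omega) hj.2
    have hσj0 : 0 ≤ σ j := hσnn' j (by omega) hj.2
    have e2 : μ m * (σ m - σ (m + 1)) ≤ μ i * (σ i - σ j) :=
      mul_le_mul hμm (by linarith) (by linarith) (by linarith)
    have e3 : c * (P j i ^ 2 + Q j i ^ 2) ≤ μ i * (σ i - σ j) * (P j i ^ 2 + Q j i ^ 2) :=
      mul_le_mul_of_nonneg_right (hc1.trans e2) (by positivity)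
    nlinarith [e3, mul_nonneg (mul_nonneg hμi.le hσj0) (sq_nonneg (P j i - Q j i))]
  -- piece III
  have hIIIP : c * (∑ i ∈ s, ∑ j ∈ Finset.Ioc r dx, P j i ^ 2) ≤
      ∑ i ∈ s, ∑ j ∈ Finset.Ioc r dx, μ i * σ i * P j i ^ 2 := by
    rw [Finset.mul_sum]
    refine Finset.sum_le_sum (fun i hi => ?_)
    rw [Finset.mul_sum]
    refine Finset.sum_le_sum (fun j _ => ?_)
    have hμi := hμposi i hi
    have hσi := hσposi i hi
    have : c ≤ μ i * σ i := by
      calc c ≤ μ m * (σ m - σ (m + 1)) := hc1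
        _ ≤ μ m * σ m := by
          have e : μ m * (σ m - σ (m + 1)) = μ m * σ m - μ m * σ (m + 1) := by ring
          rw [e]; linarith [mul_nonneg hμpos.le hσm1nn]
        _ ≤ μ i * σ i := mul_le_mul (hμle i hi) (hσle i hi) hσmpos.le hμi.le
    exact mul_le_mul_of_nonneg_right this (sq_nonneg _)
  have hIIIQ : c * (∑ i ∈ s, ∑ j ∈ Finset.Ioc r dy, Q j i ^ 2) ≤
      ∑ i ∈ s, ∑ j ∈ Finset.Ioc r dy, μ i * σ i * Q j i ^ 2 := by
    rw [Finset.mul_sum]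
    refine Finset.sum_le_sum (fun i hi => ?_)
    rw [Finset.mul_sum]
    refine Finset.sum_le_sum (fun j _ => ?_)
    have hμi := hμposi i hi
    have hσi := hσposi i hi
    have : c ≤ μ i * σ i := by
      calc c ≤ μ m * (σ m - σ (m + 1)) := hc1
        _ ≤ μ m * σ m := by
          have e : μ m * (σ m - σ (m + 1)) = μ m * σ m - μ m * σ (m + 1) := by ring
          rw [e]; linarith [mul_nonneg hμpos.le hσm1nn]
        _ ≤ μ i * σ i := mul_le_mul (hμle i hi) (hσle i hi) hσmpos.le hμi.le
    exact mul_le_mul_of_nonneg_right this (sq_nonneg _)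
  -- combine
  have hadd1 : (∑ i ∈ s, ∑ j ∈ s, (P j i ^ 2 + Q j i ^ 2))
      = (∑ i ∈ s, ∑ j ∈ s, P j i ^ 2) + ∑ i ∈ s, ∑ j ∈ s, Q j i ^ 2 := by
    simp only [Finset.sum_add_distrib]
  have hadd2 : (∑ i ∈ s, ∑ j ∈ Finset.Ioc m r, (P j i ^ 2 + Q j i ^ 2))
      = (∑ i ∈ s, ∑ j ∈ Finset.Ioc m r, P j i ^ 2) + ∑ i ∈ s, ∑ j ∈ Finset.Ioc m r, Q j i ^ 2 := by
    simp only [Finset.sum_add_distrib]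
  set A1 := ∑ i ∈ s, ∑ j ∈ s, P j i ^ 2 with hA1
  set A2 := ∑ i ∈ s, ∑ j ∈ Finset.Ioc m r, P j i ^ 2 with hA2
  set A3 := ∑ i ∈ s, ∑ j ∈ Finset.Ioc r dx, P j i ^ 2 with hA3
  set B1 := ∑ i ∈ s, ∑ j ∈ s, Q j i ^ 2 with hB1
  set B2 := ∑ i ∈ s, ∑ j ∈ Finset.Ioc m r, Q j i ^ 2 with hB2
  set B3 := ∑ i ∈ s, ∑ j ∈ Finset.Ioc r dy, Q j i ^ 2 with hB3
  rw [hadd1] at hI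
  rw [hadd2] at hII
  rw [hN, hFP, hFQ]
  have expand : c * (A1 + A2 + A3 + (B1 + B2 + B3))
      = c * (A1 + B1) + c * (A2 + B2) + c * A3 + c * B3 := by ring
  rw [expand]
  exact add_le_add (add_le_add (add_le_add hI hII) hIIIP) hIIIQ
end

section
/- Let δ > 0 and define the weighted denominator D_δ(P,Q) := Σ_{i=1}^m √(μ_i²σ_i² + δ) · (Σ_{j=1}^{d_x} P(j,i)² + Σ_{j=1}^{d_y} Q(j,i)²). With N(P,Q) defined in the context, it holds that N(P,Q) ≤ max{ max_{i,j ∈ {1,…,m}, i ≠ j} (μ_i + μ_j)(σ_i + σ_j)/(√(μ_i²σ_i² + δ) + √(μ_j²σ_j² + δ)), max_{i ∈ {1,…,m}} μ_i(σ_i + σ_{m+1})/√(μ_i²σ_i² + δ) } · D_δ(P,Q). -/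
/-- The weighted denominator
`D_δ(P,Q) := Σ_{i=1}^m √(μ_i²σ_i² + δ) (Σ_{j=1}^{d_x} P(j,i)² + Σ_{j=1}^{d_y} Q(j,i)²)`. -/
noncomputable def Dval (m dx dy : ℕ) (μ σ : ℕ → ℝ) (δ : ℝ) (P Q : ℕ → ℕ → ℝ) : ℝ :=
  ∑ i ∈ Finset.Icc 1 m, Real.sqrt ((μ i) ^ 2 * (σ i) ^ 2 + δ) *
    ((∑ j ∈ Finset.Icc 1 dx, (P j i) ^ 2) + (∑ j ∈ Finset.Icc 1 dy, (Q j i) ^ 2))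

/-!
Write `C` for the maximum and `wᵢ = √(μᵢ²σᵢ² + δ)`, and split every column into its first `m`
rows and the remaining ones. On the leading `m × m` blocks, skew-symmetry identifies the entries
`(j, i)` and `(i, j)` up to sign, so the head of `N` is a sum over unordered pairs `{i, j}` of
`(μᵢσᵢ + μⱼσⱼ) t - 2 (μᵢσⱼ + μⱼσᵢ) P Q` with `t = P² + Q²`; by `-2PQ ≤ P² + Q²` this is at most
`(μᵢ + μⱼ)(σᵢ + σⱼ) t ≤ C (wᵢ + wⱼ) t`. In the remaining rows `0 ≤ σⱼ ≤ σ_{m+1}`, so the same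
inequality bounds the rest of column `i` by `μᵢ (σᵢ + σ_{m+1}) ≤ C wᵢ` times its squared norm.
-/

open Finset

theorem Finset.sum_Icc_one_eq_add_sum_Icc {M : Type*} [AddCommMonoid M] (f : ℕ → M)
    {m n : ℕ} (hmn : m ≤ n) :
    ∑ j ∈ Icc 1 n, f j = ∑ j ∈ Icc 1 m, f j + ∑ j ∈ Icc (m + 1) n, f j := by
  have h := sum_Ioc_consecutive f m.zero_le hmn
  simp only [← Icc_add_one_left_eq_Ioc, zero_add] at h
  exact h.symm

theorem Finset.sum_sum_le_sum_sum_of_add_swap_le {ι M : Type*} [AddCommMonoid M] [LinearOrder M]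
    [IsOrderedCancelAddMonoid M] (s : Finset ι) {f g : ι → ι → M}
    (h : ∀ i ∈ s, ∀ j ∈ s, f i j + f j i ≤ g i j + g j i) :
    ∑ i ∈ s, ∑ j ∈ s, f i j ≤ ∑ i ∈ s, ∑ j ∈ s, g i j := by
  have symm (F : ι → ι → M) :
      2 • ∑ i ∈ s, ∑ j ∈ s, F i j = ∑ i ∈ s, ∑ j ∈ s, (F i j + F j i) := by
    simp only [sum_add_distrib, two_nsmul]
    rw [sum_comm (f := fun i j => F j i)]
  rw [← nsmul_le_nsmul_iff_right two_ne_zero, symm, symm]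
  exact sum_le_sum fun i hi => sum_le_sum fun j hj => h i hi j hj

theorem le_sSup_of_mem_offDiag {ι α : Type*} [ConditionallyCompleteLattice α] {s : Finset ι}
    (f : ι → ι → α) {i j : ι} (hi : i ∈ s) (hj : j ∈ s) (hij : i ≠ j) :
    f i j ≤ sSup {x | ∃ i ∈ s, ∃ j ∈ s, i ≠ j ∧ x = f i j} := by
  have : Nonempty α := ⟨f i j⟩
  refine le_csSup (Set.Finite.bddAbove ?_) ⟨i, hi, j, hj, hij, rfl⟩
  refine ((s ×ˢ s).finite_toSet.image fun p => f p.1 p.2).subset ?_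
  rintro _ ⟨i, hi, j, hj, -, rfl⟩
  exact ⟨(i, j), by simp [hi, hj], rfl⟩

theorem le_sSup_of_mem_finset {ι α : Type*} [ConditionallyCompleteLattice α] {s : Finset ι}
    (f : ι → α) {i : ι} (hi : i ∈ s) :
    f i ≤ sSup {x | ∃ i ∈ s, x = f i} := by
  have : Nonempty α := ⟨f i⟩
  refine le_csSup (Set.Finite.bddAbove ?_) ⟨i, hi, rfl⟩
  refine (s.finite_toSet.image f).subset ?_
  rintro _ ⟨i, hi, rfl⟩
  exact ⟨i, hi, rfl⟩

theorem neg_two_mul_sum_mul_mul_le {ι : Type*} {s t u : Finset ι} {σ p q : ι → ℝ} {c : ℝ}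
    (hst : s ⊆ t) (hsu : s ⊆ u) (hc : 0 ≤ c) (hσ : ∀ j ∈ s, 0 ≤ σ j ∧ σ j ≤ c) :
    -(2 * ∑ j ∈ s, σ j * p j * q j) ≤ c * (∑ j ∈ t, p j ^ 2 + ∑ j ∈ u, q j ^ 2) := by
  calc -(2 * ∑ j ∈ s, σ j * p j * q j)
      ≤ ∑ j ∈ s, c * (p j ^ 2 + q j ^ 2) := by
        rw [mul_sum, ← sum_neg_distrib]
        refine sum_le_sum fun j hj => ?_
        obtain ⟨hσ₀, hσc⟩ := hσ j hj
        nlinarith [mul_nonneg hσ₀ (sq_nonneg (p j + q j)),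
          mul_nonneg (sub_nonneg.2 hσc) (add_nonneg (sq_nonneg (p j)) (sq_nonneg (q j)))]
    _ ≤ c * (∑ j ∈ t, p j ^ 2 + ∑ j ∈ u, q j ^ 2) := by
        rw [← mul_sum, sum_add_distrib]
        gcongr

theorem sum_sum_skewSymm_le {ι : Type*} {s : Finset ι} {a b w : ι → ℝ} {C : ℝ} {P Q : ι → ι → ℝ}
    (ha : ∀ i ∈ s, 0 ≤ a i) (hb : ∀ i ∈ s, 0 ≤ b i)
    (hP : ∀ i ∈ s, ∀ j ∈ s, P i j = -P j i) (hQ : ∀ i ∈ s, ∀ j ∈ s, Q i j = -Q j i)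
    (hC : ∀ i ∈ s, ∀ j ∈ s, i ≠ j → (a i + a j) * (b i + b j) ≤ C * (w i + w j)) :
    ∑ i ∈ s, ∑ j ∈ s, a i * (b i * (P j i ^ 2 + Q j i ^ 2) - 2 * (b j * P j i * Q j i)) ≤
      C * ∑ i ∈ s, ∑ j ∈ s, w i * (P j i ^ 2 + Q j i ^ 2) := by
  simp only [mul_sum]
  refine sum_sum_le_sum_sum_of_add_swap_le s fun i hi j hj => ?_
  rcases eq_or_ne i j with rfl | hij
  · have hPi : P i i = 0 := by linarith [hP i hi i hi]
    have hQi : Q i i = 0 := by linarith [hQ i hi i hi]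
    simp [hPi, hQi]
  · rw [hP i hi j hj, hQ i hi j hj]
    have hcross : 0 ≤ a i * b j + a j * b i :=
      add_nonneg (mul_nonneg (ha i hi) (hb j hj)) (mul_nonneg (ha j hj) (hb i hi))
    nlinarith [mul_le_mul_of_nonneg_right (hC i hi j hj hij)
        (add_nonneg (sq_nonneg (P j i)) (sq_nonneg (Q j i))),
      mul_nonneg hcross (sq_nonneg (P j i + Q j i))]

theorem Nval_eq_head_add_tail {m r dx dy : ℕ} (μ σ : ℕ → ℝ) (P Q : ℕ → ℕ → ℝ) (hr : m ≤ r)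
    (hdx : m ≤ dx) (hdy : m ≤ dy) :
    Nval m r dx dy μ σ P Q =
      ∑ i ∈ Icc 1 m, ∑ j ∈ Icc 1 m,
          μ i * (σ i * (P j i ^ 2 + Q j i ^ 2) - 2 * (σ j * P j i * Q j i)) +
        ∑ i ∈ Icc 1 m, μ i * (σ i * (∑ j ∈ Icc (m + 1) dx, P j i ^ 2 +
          ∑ j ∈ Icc (m + 1) dy, Q j i ^ 2) - 2 * ∑ j ∈ Icc (m + 1) r, σ j * P j i * Q j i) := by
  rw [Nval, ← sum_add_distrib]
  refine sum_congr rfl fun i _ => ?_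
  rw [sum_Icc_one_eq_add_sum_Icc _ hdx, sum_Icc_one_eq_add_sum_Icc _ hdy,
    sum_Icc_one_eq_add_sum_Icc _ hr, ← mul_sum, sum_sub_distrib, ← mul_sum, ← mul_sum,
    sum_add_distrib]
  ring

theorem Dval_eq_head_add_tail {m dx dy : ℕ} (μ σ : ℕ → ℝ) (δ : ℝ) (P Q : ℕ → ℕ → ℝ)
    (hdx : m ≤ dx) (hdy : m ≤ dy) :
    Dval m dx dy μ σ δ P Q =
      ∑ i ∈ Icc 1 m, ∑ j ∈ Icc 1 m, √(μ i ^ 2 * σ i ^ 2 + δ) * (P j i ^ 2 + Q j i ^ 2) +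
        ∑ i ∈ Icc 1 m, √(μ i ^ 2 * σ i ^ 2 + δ) *
          (∑ j ∈ Icc (m + 1) dx, P j i ^ 2 + ∑ j ∈ Icc (m + 1) dy, Q j i ^ 2) := by
  rw [Dval, ← sum_add_distrib]
  refine sum_congr rfl fun i _ => ?_
  rw [sum_Icc_one_eq_add_sum_Icc _ hdx, sum_Icc_one_eq_add_sum_Icc _ hdy, ← mul_sum,
    sum_add_distrib]
  ring

theorem Nval_le_mul_Dval {m r dx dy : ℕ} {μ σ : ℕ → ℝ} {δ C : ℝ} {P Q : ℕ → ℕ → ℝ}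
    (hr : m + 1 ≤ r) (hdx : r ≤ dx) (hdy : r ≤ dy)
    (hμ : ∀ i ∈ Icc 1 m, 0 ≤ μ i) (hσ : ∀ j ∈ Icc 1 r, 0 ≤ σ j)
    (hσtail : ∀ j ∈ Icc (m + 1) r, σ j ≤ σ (m + 1))
    (hP : ∀ i ∈ Icc 1 m, ∀ j ∈ Icc 1 m, P i j = -P j i)
    (hQ : ∀ i ∈ Icc 1 m, ∀ j ∈ Icc 1 m, Q i j = -Q j i)
    (hpair : ∀ i ∈ Icc 1 m, ∀ j ∈ Icc 1 m, i ≠ j → (μ i + μ j) * (σ i + σ j) ≤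
      C * (√(μ i ^ 2 * σ i ^ 2 + δ) + √(μ j ^ 2 * σ j ^ 2 + δ)))
    (hsingle : ∀ i ∈ Icc 1 m, μ i * (σ i + σ (m + 1)) ≤ C * √(μ i ^ 2 * σ i ^ 2 + δ)) :
    Nval m r dx dy μ σ P Q ≤ C * Dval m dx dy μ σ δ P Q := by
  have hmr : m ≤ r := by omega
  rw [Nval_eq_head_add_tail μ σ P Q hmr (by omega) (by omega),
    Dval_eq_head_add_tail μ σ δ P Q (by omega) (by omega), mul_add]
  refine add_le_add (sum_sum_skewSymm_le hμ (fun i hi => hσ i (Icc_subset_Icc_right hmr hi))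
    hP hQ hpair) ?_
  rw [mul_sum]
  refine sum_le_sum fun i hi => ?_
  set T := ∑ j ∈ Icc (m + 1) dx, P j i ^ 2 + ∑ j ∈ Icc (m + 1) dy, Q j i ^ 2
  have hcross : -(2 * ∑ j ∈ Icc (m + 1) r, σ j * P j i * Q j i) ≤ σ (m + 1) * T :=
    neg_two_mul_sum_mul_mul_le (Icc_subset_Icc_right hdx) (Icc_subset_Icc_right hdy)
      (hσ _ (mem_Icc.2 ⟨by omega, hr⟩))
      fun j hj => ⟨hσ j (Icc_subset_Icc_left (by omega) hj), hσtail j hj⟩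
  calc μ i * (σ i * T - 2 * ∑ j ∈ Icc (m + 1) r, σ j * P j i * Q j i)
      ≤ μ i * (σ i + σ (m + 1)) * T := by
        nlinarith [mul_le_mul_of_nonneg_left hcross (hμ i hi)]
    _ ≤ C * √(μ i ^ 2 * σ i ^ 2 + δ) * T :=
        mul_le_mul_of_nonneg_right (hsingle i hi) (by positivity)
    _ = C * (√(μ i ^ 2 * σ i ^ 2 + δ) * T) := mul_assoc ..

theorem stmt6_general (m r dx dy : ℕ) (hr : m + 1 ≤ r) (hdx : r ≤ dx) (hdy : r ≤ dy)
    (μ σ : ℕ → ℝ)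
    (hμ : ∀ i, 1 ≤ i → i < m → μ (i + 1) < μ i) (hμpos : 0 < μ m)
    (hσ : ∀ i, 1 ≤ i → i ≤ m → σ (i + 1) < σ i)
    (hσmono : ∀ i, m + 1 ≤ i → i < r → σ (i + 1) ≤ σ i)
    (hσnn : 0 ≤ σ r)
    (δ : ℝ) (hδ : 0 < δ)
    (P Q : ℕ → ℕ → ℝ)
    (hP : ∀ i ∈ Finset.Icc 1 m, ∀ j ∈ Finset.Icc 1 m, P i j = -P j i)
    (hQ : ∀ i ∈ Finset.Icc 1 m, ∀ j ∈ Finset.Icc 1 m, Q i j = -Q j i) :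
    Nval m r dx dy μ σ P Q ≤
      max
          (sSup {x : ℝ | ∃ i ∈ Finset.Icc 1 m, ∃ j ∈ Finset.Icc 1 m, i ≠ j ∧
            x = (μ i + μ j) * (σ i + σ j) /
              (Real.sqrt ((μ i) ^ 2 * (σ i) ^ 2 + δ) + Real.sqrt ((μ j) ^ 2 * (σ j) ^ 2 + δ))})
          (sSup {x : ℝ | ∃ i ∈ Finset.Icc 1 m,
            x = μ i * (σ i + σ (m + 1)) / Real.sqrt ((μ i) ^ 2 * (σ i) ^ 2 + δ)}) *
        Dval m dx dy μ σ δ P Q := by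
  have hμanti : AntitoneOn μ (Set.Icc 1 m) :=
    antitoneOn_of_add_one_le Set.ordConnected_Icc fun i _ hi hi' => (hμ i hi.1 hi'.2).le
  have hσanti : AntitoneOn σ (Set.Icc 1 r) := by
    refine antitoneOn_of_add_one_le Set.ordConnected_Icc fun i _ hi hi' => ?_
    rcases le_or_gt i m with him | hmi
    · exact (hσ i hi.1 him).le
    · exact hσmono i hmi hi'.2
  have hμ₀ : ∀ i ∈ Icc 1 m, 0 ≤ μ i := fun i hi => by
    obtain ⟨h1, h2⟩ := mem_Icc.1 hi
    exact hμpos.le.trans (hμanti ⟨h1, h2⟩ ⟨h1.trans h2, le_rfl⟩ h2)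
  have hσ₀ : ∀ j ∈ Icc 1 r, 0 ≤ σ j := fun j hj => by
    obtain ⟨h1, h2⟩ := mem_Icc.1 hj
    exact hσnn.trans (hσanti ⟨h1, h2⟩ ⟨h1.trans h2, le_rfl⟩ h2)
  have hσtail : ∀ j ∈ Icc (m + 1) r, σ j ≤ σ (m + 1) := fun j hj => by
    obtain ⟨h1, h2⟩ := mem_Icc.1 hj
    exact hσanti ⟨by omega, hr⟩ ⟨by omega, h2⟩ h1
  refine Nval_le_mul_Dval hr hdx hdy hμ₀ hσ₀ hσtail hP hQ (fun i hi j hj hij => ?_)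
    (fun i hi => ?_)
  · rw [← div_le_iff₀ (by positivity)]
    refine le_max_of_le_left ?_
    apply le_sSup_of_mem_offDiag _ hi hj hij
  · rw [← div_le_iff₀ (by positivity)]
    refine le_max_of_le_right ?_
    apply le_sSup_of_mem_finset _ hi

/-- Upper Rayleigh-quotient bound for CCA under the new left-and-right
preconditioned metric (Proposition 4.4). -/
theorem stmt6 (m r dx dy : ℕ) (hm : 2 ≤ m) (hr : m + 1 ≤ r) (hdx : r ≤ dx) (hdy : r ≤ dy)
    (μ σ : ℕ → ℝ)
    (hμ : ∀ i, 1 ≤ i → i < m → μ (i + 1) < μ i) (hμpos : 0 < μ m)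
    (hσ : ∀ i, 1 ≤ i → i ≤ m → σ (i + 1) < σ i)
    (hσmono : ∀ i, m + 1 ≤ i → i < r → σ (i + 1) ≤ σ i)
    (hσnn : 0 ≤ σ r)
    (δ : ℝ) (hδ : 0 < δ)
    (P Q : ℕ → ℕ → ℝ)
    (hP : ∀ i ∈ Finset.Icc 1 m, ∀ j ∈ Finset.Icc 1 m, P i j = -P j i)
    (hQ : ∀ i ∈ Finset.Icc 1 m, ∀ j ∈ Finset.Icc 1 m, Q i j = -Q j i) :
    Nval m r dx dy μ σ P Q ≤
      max
          (sSup {x : ℝ | ∃ i ∈ Finset.Icc 1 m, ∃ j ∈ Finset.Icc 1 m, i ≠ j ∧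
            x = (μ i + μ j) * (σ i + σ j) /
              (Real.sqrt ((μ i) ^ 2 * (σ i) ^ 2 + δ) + Real.sqrt ((μ j) ^ 2 * (σ j) ^ 2 + δ))})
          (sSup {x : ℝ | ∃ i ∈ Finset.Icc 1 m,
            x = μ i * (σ i + σ (m + 1)) / Real.sqrt ((μ i) ^ 2 * (σ i) ^ 2 + δ)}) *
        Dval m dx dy μ σ δ P Q :=
  stmt6_general m r dx dy hr hdx hdy μ σ hμ hμpos hσ hσmono hσnn δ hδ P Q hP hQ
end

section
/- Let δ > 0 and define the weighted denominator D_δ(P,Q) := Σ_{i=1}^m √(μ_i²σ_i² + δ) · (Σ_{j=1}^{d_x} P(j,i)² + Σ_{j=1}^{d_y} Q(j,i)²). With N(P,Q) defined in the context, it holds that N(P,Q) ≥ min{ min_{i,j ∈ {1,…,m}, i ≠ j} (μ_i − μ_j)(σ_i − σ_j)/(√(μ_i²σ_i² + δ) + √(μ_j²σ_j² + δ)), min_{i ∈ {1,…,m}} μ_i(σ_i − σ_{m+1})/√(μ_i²σ_i² + δ) } · D_δ(P,Q). -/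
/-- Strict decrease along a chain. -/
lemma chain_lt (f : ℕ → ℝ) (a b : ℕ) (h : ∀ k, a ≤ k → k < b → f (k+1) < f k) :
    ∀ j, j ≤ b → ∀ i, a ≤ i → i < j → f j < f i := by
  intro j
  induction j with
  | zero => intro _ i _ hij; omega
  | succ n ih =>
    intro hb i hai hij
    rcases Nat.lt_or_ge i n with h' | h'
    · exact lt_trans (h n (by omega) (by omega)) (ih (by omega) i hai h')
    · have : i = n := by omega
      subst this
      exact h i hai (by omega)

/-- Splitting a sum over `Icc 1 n'` at `n`. -/
lemma Icc_split (F : ℕ → ℝ) {n n' : ℕ} (h : n ≤ n') :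
    ∑ j ∈ Finset.Icc 1 n', F j
      = (∑ j ∈ Finset.Icc 1 n, F j) + ∑ j ∈ Finset.Ioc n n', F j := by
  have e : ∀ k : ℕ, Finset.Icc 1 k = Finset.Ioc 0 k := by
    intro k; ext i; simp; omega
  rw [e, e, ← Finset.sum_Ioc_consecutive _ (Nat.zero_le n) h]

/-- Lower Rayleigh-quotient bound for CCA under the new left-and-right
preconditioned metric (Proposition 4.4). -/
theorem stmt7 (m r dx dy : ℕ) (hm : 2 ≤ m) (hr : m + 1 ≤ r) (hdx : r ≤ dx) (hdy : r ≤ dy)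
    (μ σ : ℕ → ℝ)
    (hμ : ∀ i, 1 ≤ i → i < m → μ (i + 1) < μ i) (hμpos : 0 < μ m)
    (hσ : ∀ i, 1 ≤ i → i ≤ m → σ (i + 1) < σ i)
    (hσmono : ∀ i, m + 1 ≤ i → i < r → σ (i + 1) ≤ σ i)
    (hσnn : 0 ≤ σ r)
    (δ : ℝ) (hδ : 0 < δ)
    (P Q : ℕ → ℕ → ℝ)
    (hP : ∀ i ∈ Finset.Icc 1 m, ∀ j ∈ Finset.Icc 1 m, P i j = -P j i)
    (hQ : ∀ i ∈ Finset.Icc 1 m, ∀ j ∈ Finset.Icc 1 m, Q i j = -Q j i) :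
    min
        (sInf {x : ℝ | ∃ i ∈ Finset.Icc 1 m, ∃ j ∈ Finset.Icc 1 m, i ≠ j ∧
          x = (μ i - μ j) * (σ i - σ j) /
            (Real.sqrt ((μ i) ^ 2 * (σ i) ^ 2 + δ) + Real.sqrt ((μ j) ^ 2 * (σ j) ^ 2 + δ))})
        (sInf {x : ℝ | ∃ i ∈ Finset.Icc 1 m,
          x = μ i * (σ i - σ (m + 1)) / Real.sqrt ((μ i) ^ 2 * (σ i) ^ 2 + δ)}) *
      Dval m dx dy μ σ δ P Q ≤
    Nval m r dx dy μ σ P Q := by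
  -- abbreviations
  set A := {x : ℝ | ∃ i ∈ Finset.Icc 1 m, ∃ j ∈ Finset.Icc 1 m, i ≠ j ∧
          x = (μ i - μ j) * (σ i - σ j) /
            (Real.sqrt ((μ i) ^ 2 * (σ i) ^ 2 + δ) + Real.sqrt ((μ j) ^ 2 * (σ j) ^ 2 + δ))}
    with hA
  set B := {x : ℝ | ∃ i ∈ Finset.Icc 1 m,
          x = μ i * (σ i - σ (m + 1)) / Real.sqrt ((μ i) ^ 2 * (σ i) ^ 2 + δ)} with hB
  set c := min (sInf A) (sInf B) with hc
  -- positivity of the sqrt terms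
  have hapos : ∀ i : ℕ, 0 < Real.sqrt ((μ i) ^ 2 * (σ i) ^ 2 + δ) := by
    intro i
    apply Real.sqrt_pos.mpr
    have : 0 ≤ (μ i) ^ 2 * (σ i) ^ 2 := by positivity
    linarith
  -- finiteness / boundedness of the two sets
  have hAfin : A.Finite := by
    have hsub : A ⊆ (fun p : ℕ × ℕ => (μ p.1 - μ p.2) * (σ p.1 - σ p.2) /
        (Real.sqrt ((μ p.1) ^ 2 * (σ p.1) ^ 2 + δ) + Real.sqrt ((μ p.2) ^ 2 * (σ p.2) ^ 2 + δ)))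
        '' ((Finset.Icc 1 m ×ˢ Finset.Icc 1 m : Finset (ℕ × ℕ)) : Set (ℕ × ℕ)) := by
      rintro x ⟨i, hi, j, hj, hij, rfl⟩
      exact ⟨(i, j), Finset.mem_coe.mpr (Finset.mem_product.mpr ⟨hi, hj⟩), rfl⟩
    exact Set.Finite.subset (Set.Finite.image _ (Finset.finite_toSet _)) hsub
  have hBfin : B.Finite := by
    have hsub : B ⊆ (fun i : ℕ => μ i * (σ i - σ (m + 1)) /
        Real.sqrt ((μ i) ^ 2 * (σ i) ^ 2 + δ)) '' ((Finset.Icc 1 m : Finset ℕ) : Set ℕ) := by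
      rintro x ⟨i, hi, rfl⟩
      exact ⟨i, by simpa using hi, rfl⟩
    exact Set.Finite.subset (Set.Finite.image _ (Finset.finite_toSet _)) hsub
  -- key bounds obtained from the infima
  have h1 : ∀ i ∈ Finset.Icc 1 m, ∀ j ∈ Finset.Icc 1 m, i ≠ j →
      c * (Real.sqrt ((μ i) ^ 2 * (σ i) ^ 2 + δ) + Real.sqrt ((μ j) ^ 2 * (σ j) ^ 2 + δ))
        ≤ (μ i - μ j) * (σ i - σ j) := by
    intro i hi j hj hij
    have hmem : (μ i - μ j) * (σ i - σ j) /
        (Real.sqrt ((μ i) ^ 2 * (σ i) ^ 2 + δ) + Real.sqrt ((μ j) ^ 2 * (σ j) ^ 2 + δ)) ∈ A :=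
      ⟨i, hi, j, hj, hij, rfl⟩
    have hle : c ≤ (μ i - μ j) * (σ i - σ j) /
        (Real.sqrt ((μ i) ^ 2 * (σ i) ^ 2 + δ) + Real.sqrt ((μ j) ^ 2 * (σ j) ^ 2 + δ)) :=
      le_trans (min_le_left _ _) (csInf_le hAfin.bddBelow hmem)
    have hd : 0 < Real.sqrt ((μ i) ^ 2 * (σ i) ^ 2 + δ)
        + Real.sqrt ((μ j) ^ 2 * (σ j) ^ 2 + δ) := by
      have := hapos i; have := hapos j; linarith
    exact (le_div_iff₀ hd).mp hle
  have h2 : ∀ i ∈ Finset.Icc 1 m,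
      c * Real.sqrt ((μ i) ^ 2 * (σ i) ^ 2 + δ) ≤ μ i * (σ i - σ (m + 1)) := by
    intro i hi
    have hmem : μ i * (σ i - σ (m + 1)) / Real.sqrt ((μ i) ^ 2 * (σ i) ^ 2 + δ) ∈ B :=
      ⟨i, hi, rfl⟩
    have hle : c ≤ μ i * (σ i - σ (m + 1)) / Real.sqrt ((μ i) ^ 2 * (σ i) ^ 2 + δ) :=
      le_trans (min_le_right _ _) (csInf_le hBfin.bddBelow hmem)
    exact (le_div_iff₀ (hapos i)).mp hle
  -- monotonicity facts
  have hσlt : ∀ j, j ≤ m + 1 → ∀ i, 1 ≤ i → i < j → σ j < σ i :=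
    chain_lt σ 1 (m+1) (fun k hk hk' => hσ k hk (by omega))
  have hσle' : ∀ j, j ≤ r → ∀ i, m + 1 ≤ i → i ≤ j → σ j ≤ σ i :=
    chain_le σ (m+1) r hσmono
  have hμlt : ∀ j, j ≤ m → ∀ i, 1 ≤ i → i < j → μ j < μ i :=
    chain_lt μ 1 m hμ
  have hμpos' : ∀ i, 1 ≤ i → i ≤ m → 0 < μ i := by
    intro i h1i h2i
    rcases eq_or_lt_of_le h2i with h | h
    · subst h; exact hμpos
    · exact lt_trans hμpos (hμlt m le_rfl i h1i h)
  have hσm1 : 0 ≤ σ (m + 1) :=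
    le_trans hσnn (hσle' r le_rfl (m+1) le_rfl hr)
  have hσpos' : ∀ i, 1 ≤ i → i ≤ m → σ (m + 1) < σ i := by
    intro i h1i h2i
    exact hσlt (m+1) le_rfl i h1i (by omega)
  -- nonnegativity of μᵢσᵢ - c·aᵢ for i ∈ [1, m]
  have hkey0 : ∀ i ∈ Finset.Icc 1 m,
      0 ≤ μ i * σ i - c * Real.sqrt ((μ i) ^ 2 * (σ i) ^ 2 + δ) := by
    intro i hi
    simp only [Finset.mem_Icc] at hi
    have h2' := h2 i (by simp [Finset.mem_Icc]; omega)
    have hμi := hμpos' i hi.1 hi.2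
    nlinarith [mul_nonneg (le_of_lt hμi) hσm1]
  -- diagonal entries vanish
  have hPdiag : ∀ i ∈ Finset.Icc 1 m, P i i = 0 := by
    intro i hi; have := hP i hi i hi; linarith
  have hQdiag : ∀ i ∈ Finset.Icc 1 m, Q i i = 0 := by
    intro i hi; have := hQ i hi i hi; linarith
  -- the pointwise quadratic form
  set f : ℕ → ℕ → ℝ := fun i j =>
    (μ i * σ i - c * Real.sqrt ((μ i) ^ 2 * (σ i) ^ 2 + δ)) * ((P j i) ^ 2 + (Q j i) ^ 2)
      - 2 * μ i * (σ j * P j i * Q j i) with hf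
  -- T1, T2, T3, T4
  set T1 := ∑ i ∈ Finset.Icc 1 m, ∑ j ∈ Finset.Icc 1 m, f i j with hT1d
  set T2 := ∑ i ∈ Finset.Icc 1 m, ∑ j ∈ Finset.Ioc m r, f i j with hT2d
  set T3 := ∑ i ∈ Finset.Icc 1 m, ∑ j ∈ Finset.Ioc r dx,
    (μ i * σ i - c * Real.sqrt ((μ i) ^ 2 * (σ i) ^ 2 + δ)) * (P j i) ^ 2 with hT3d
  set T4 := ∑ i ∈ Finset.Icc 1 m, ∑ j ∈ Finset.Ioc r dy,
    (μ i * σ i - c * Real.sqrt ((μ i) ^ 2 * (σ i) ^ 2 + δ)) * (Q j i) ^ 2 with hT4d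
  -- the algebraic decomposition
  have key : Nval m r dx dy μ σ P Q - c * Dval m dx dy μ σ δ P Q = T1 + T2 + T3 + T4 := by
    rw [hT1d, hT2d, hT3d, hT4d]
    unfold Nval Dval
    rw [Finset.mul_sum]
    simp only [← Finset.sum_sub_distrib, ← Finset.sum_add_distrib]
    apply Finset.sum_congr rfl
    intro i hi
    have e1 : (∑ j ∈ Finset.Icc 1 dx, (P j i) ^ 2)
        = (∑ j ∈ Finset.Icc 1 m, (P j i) ^ 2) + (∑ j ∈ Finset.Ioc m r, (P j i) ^ 2)
          + ∑ j ∈ Finset.Ioc r dx, (P j i) ^ 2 := by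
      rw [Icc_split _ hdx, Icc_split _ (by omega : m ≤ r)]
    have e2 : (∑ j ∈ Finset.Icc 1 dy, (Q j i) ^ 2)
        = (∑ j ∈ Finset.Icc 1 m, (Q j i) ^ 2) + (∑ j ∈ Finset.Ioc m r, (Q j i) ^ 2)
          + ∑ j ∈ Finset.Ioc r dy, (Q j i) ^ 2 := by
      rw [Icc_split _ hdy, Icc_split _ (by omega : m ≤ r)]
    have e3 : (∑ j ∈ Finset.Icc 1 r, σ j * P j i * Q j i)
        = (∑ j ∈ Finset.Icc 1 m, σ j * P j i * Q j i)
          + ∑ j ∈ Finset.Ioc m r, σ j * P j i * Q j i := by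
      rw [Icc_split _ (by omega : m ≤ r)]
    rw [e1, e2, e3]
    simp only [hf, Finset.sum_sub_distrib, Finset.sum_add_distrib, ← Finset.mul_sum]
    ring
  -- pointwise nonnegativity for the symmetrized (m × m) block
  have hpt : ∀ i ∈ Finset.Icc 1 m, ∀ j ∈ Finset.Icc 1 m, 0 ≤ f i j + f j i := by
    intro i hi j hj
    rcases eq_or_ne i j with rfl | hij
    · simp only [hf]
      simp [hPdiag i hi, hQdiag i hi]
    · have hPij : P i j = -P j i := hP i hi j hj
      have hQij : Q i j = -Q j i := hQ i hi j hj
      have h1' := h1 i hi j hj hij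
      have hi' := Finset.mem_Icc.mp hi
      have hj' := Finset.mem_Icc.mp hj
      have hμi := hμpos' i hi'.1 hi'.2
      have hμj := hμpos' j hj'.1 hj'.2
      have hσi : 0 < σ i := lt_of_le_of_lt hσm1 (hσpos' i hi'.1 hi'.2)
      have hσj : 0 < σ j := lt_of_le_of_lt hσm1 (hσpos' j hj'.1 hj'.2)
      have hA : 0 ≤ (μ i - μ j) * (σ i - σ j)
          - c * (Real.sqrt ((μ i) ^ 2 * (σ i) ^ 2 + δ)
            + Real.sqrt ((μ j) ^ 2 * (σ j) ^ 2 + δ)) := by linarith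
      simp only [hf]
      rw [hPij, hQij]
      nlinarith [mul_nonneg hA (add_nonneg (sq_nonneg (P j i)) (sq_nonneg (Q j i))),
        mul_nonneg (mul_nonneg hμi.le hσj.le) (sq_nonneg (P j i - Q j i)),
        mul_nonneg (mul_nonneg hμj.le hσi.le) (sq_nonneg (P j i - Q j i))]
  -- pointwise nonnegativity for the middle block
  have hpt2 : ∀ i ∈ Finset.Icc 1 m, ∀ j ∈ Finset.Ioc m r, 0 ≤ f i j := by
    intro i hi j hj
    have hi' := Finset.mem_Icc.mp hi
    have hj' := Finset.mem_Ioc.mp hj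
    have hμi := hμpos' i hi'.1 hi'.2
    have hσjle : σ j ≤ σ (m + 1) := hσle' j hj'.2 (m + 1) le_rfl (by omega)
    have hσjnn : 0 ≤ σ j := le_trans hσnn (hσle' r le_rfl j (by omega) hj'.2)
    have h2' := h2 i hi
    simp only [hf]
    nlinarith [mul_nonneg (mul_nonneg hμi.le hσjnn) (sq_nonneg (P j i - Q j i)),
      mul_nonneg (mul_nonneg hμi.le (sub_nonneg.mpr hσjle))
        (add_nonneg (sq_nonneg (P j i)) (sq_nonneg (Q j i))),
      mul_nonneg (by linarith :
          (0:ℝ) ≤ μ i * (σ i - σ (m + 1)) - c * Real.sqrt ((μ i) ^ 2 * (σ i) ^ 2 + δ))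
        (add_nonneg (sq_nonneg (P j i)) (sq_nonneg (Q j i)))]
  -- nonnegativity of the four pieces
  have hT1nn : 0 ≤ T1 := by
    have hcomm : (∑ i ∈ Finset.Icc 1 m, ∑ j ∈ Finset.Icc 1 m, f i j)
        = ∑ i ∈ Finset.Icc 1 m, ∑ j ∈ Finset.Icc 1 m, f j i := Finset.sum_comm
    have hdd : T1 + T1 = ∑ i ∈ Finset.Icc 1 m, ∑ j ∈ Finset.Icc 1 m, (f i j + f j i) := by
      calc T1 + T1
          = (∑ i ∈ Finset.Icc 1 m, ∑ j ∈ Finset.Icc 1 m, f i j)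
            + ∑ i ∈ Finset.Icc 1 m, ∑ j ∈ Finset.Icc 1 m, f j i := by rw [hT1d, hcomm]
        _ = ∑ i ∈ Finset.Icc 1 m, ∑ j ∈ Finset.Icc 1 m, (f i j + f j i) := by
            simp [Finset.sum_add_distrib]
    have hnn : 0 ≤ T1 + T1 := by
      rw [hdd]
      exact Finset.sum_nonneg fun i hi => Finset.sum_nonneg fun j hj => hpt i hi j hj
    linarith
  have hT2nn : 0 ≤ T2 := by
    rw [hT2d]
    exact Finset.sum_nonneg fun i hi => Finset.sum_nonneg fun j hj => hpt2 i hi j hj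
  have hT3nn : 0 ≤ T3 := by
    rw [hT3d]
    exact Finset.sum_nonneg fun i hi => Finset.sum_nonneg fun j _ =>
      mul_nonneg (hkey0 i hi) (sq_nonneg _)
  have hT4nn : 0 ≤ T4 := by
    rw [hT4d]
    exact Finset.sum_nonneg fun i hi => Finset.sum_nonneg fun j _ =>
      mul_nonneg (hkey0 i hi) (sq_nonneg _)
  linarith
end

section
/- For all indices 1 ≤ i < j < k ≤ m+1 it holds that v̄_{ij}(0) > v̄_{ik}(0) and v_{ij}(0) < v_{ik}(0). Equivalently, writing the values at δ = 0 as v̄_{ij}(0) = (μ_i + μ_j)(σ_i + σ_j)/(μ_iσ_i + μ_jσ_j) and v_{ij}(0) = (μ_i − μ_j)(σ_i − σ_j)/(μ_iσ_i + μ_jσ_j) with the convention μ_{m+1} = 0, the larger the gap between the second index and i, the smaller v̄ and the larger v at δ = 0. -/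
/-- `v̄_{ij}(δ)`: for `i, j ∈ [m]`, `i ≠ j`, it is
`(μ_i + μ_j)(σ_i + σ_j)/(√(μ_i²σ_i² + δ) + √(μ_j²σ_j² + δ))`, and for `j = m+1` it is
`μ_i(σ_i + σ_{m+1})/√(μ_i²σ_i² + δ)`. -/
noncomputable def vbar (m : ℕ) (μ σ : ℕ → ℝ) (δ : ℝ) (i j : ℕ) : ℝ :=
  if j = m + 1 then μ i * (σ i + σ (m + 1)) / Real.sqrt ((μ i) ^ 2 * (σ i) ^ 2 + δ)
  else (μ i + μ j) * (σ i + σ j) /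
    (Real.sqrt ((μ i) ^ 2 * (σ i) ^ 2 + δ) + Real.sqrt ((μ j) ^ 2 * (σ j) ^ 2 + δ))

/-- `v_{ij}(δ)`: for `i, j ∈ [m]`, `i ≠ j`, it is
`(μ_i − μ_j)(σ_i − σ_j)/(√(μ_i²σ_i² + δ) + √(μ_j²σ_j² + δ))`, and for `j = m+1` it is
`μ_i(σ_i − σ_{m+1})/√(μ_i²σ_i² + δ)`. -/
noncomputable def vund (m : ℕ) (μ σ : ℕ → ℝ) (δ : ℝ) (i j : ℕ) : ℝ :=
  if j = m + 1 then μ i * (σ i - σ (m + 1)) / Real.sqrt ((μ i) ^ 2 * (σ i) ^ 2 + δ)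
  else (μ i - μ j) * (σ i - σ j) /
    (Real.sqrt ((μ i) ^ 2 * (σ i) ^ 2 + δ) + Real.sqrt ((μ j) ^ 2 * (σ j) ^ 2 + δ))

lemma sqrt_zero_aux (x y : ℝ) (hx : 0 ≤ x) (hy : 0 ≤ y) :
    Real.sqrt (x ^ 2 * y ^ 2 + 0) = x * y := by
  rw [add_zero, ← mul_pow, Real.sqrt_sq (mul_nonneg hx hy)]

lemma core_ineq (x y a b a' b' : ℝ) (hx : 0 < x) (hy : 0 < y)
    (ha' : 0 ≤ a') (haa : a' < a) (hax : a < x)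
    (hb' : 0 ≤ b') (hbb : b' < b) (hby : b < y) :
    (x + a') * (y + b') / (x * y + a' * b') < (x + a) * (y + b) / (x * y + a * b) ∧
    (x - a) * (y - b) / (x * y + a * b) < (x - a') * (y - b') / (x * y + a' * b') := by
  have ha : 0 ≤ a := ha'.trans haa.le
  have hb : 0 ≤ b := hb'.trans hbb.le
  have d1 : 0 < x * y + a * b := by positivity
  have d2 : 0 < x * y + a' * b' := by positivity
  have h1 : 0 < y * (b - b') * (x ^ 2 - a * a') := by
    have h : a * a' < x ^ 2 := by nlinarith
    have hb'' : 0 < b - b' := by linarith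
    exact mul_pos (mul_pos hy hb'') (by linarith)
  have h2 : 0 < x * (a - a') * (y ^ 2 - b * b') := by
    have h : b * b' < y ^ 2 := by nlinarith
    have ha'' : 0 < a - a' := by linarith
    exact mul_pos (mul_pos hx ha'') (by linarith)
  constructor
  · rw [div_lt_div_iff₀ d2 d1]
    nlinarith [h1, h2]
  · rw [div_lt_div_iff₀ d1 d2]
    nlinarith [h1, h2]

/-- Lemma 4.5. For all `1 ≤ i < j < k ≤ m+1`:
`v̄_{ij}(0) > v̄_{ik}(0)` and `v_{ij}(0) < v_{ik}(0)`. -/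
theorem stmt8 (m : ℕ) (hm : 2 ≤ m) (μ σ : ℕ → ℝ)
    (hμ : ∀ i, 1 ≤ i → i < m → μ (i + 1) < μ i) (hμpos : 0 < μ m)
    (hμtop : μ (m + 1) = 0)
    (hσ : ∀ i, 1 ≤ i → i ≤ m → σ (i + 1) < σ i) (hσnn : 0 ≤ σ (m + 1)) :
    ∀ i j k : ℕ, 1 ≤ i → i < j → j < k → k ≤ m + 1 →
      vbar m μ σ 0 i k < vbar m μ σ 0 i j ∧
      vund m μ σ 0 i j < vund m μ σ 0 i k := by
  -- σ is strictly decreasing on [1, m+1]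
  have hσmono : ∀ p q, 1 ≤ p → p < q → q ≤ m + 1 → σ q < σ p := by
    intro p q hp hpq hq
    induction q with
    | zero => omega
    | succ n ih =>
      have hn : 1 ≤ n := by omega
      have hstep : σ (n + 1) < σ n := hσ n hn (by omega)
      rcases Nat.lt_or_ge p n with h | h
      · exact hstep.trans (ih h (by omega))
      · have : p = n := by omega
        rw [this]; exact hstep
  -- μ is strictly decreasing on [1, m]
  have hμmonoA : ∀ p q, 1 ≤ p → p < q → q ≤ m → μ q < μ p := by
    intro p q hp hpq hq
    induction q with
    | zero => omega
    | succ n ih =>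
      have hn : 1 ≤ n := by omega
      have hstep : μ (n + 1) < μ n := hμ n hn (by omega)
      rcases Nat.lt_or_ge p n with h | h
      · exact hstep.trans (ih h (by omega))
      · have : p = n := by omega
        rw [this]; exact hstep
  have hμposAll : ∀ p, 1 ≤ p → p ≤ m → 0 < μ p := by
    intro p hp hpm
    rcases eq_or_lt_of_le hpm with h | h
    · rw [h]; exact hμpos
    · exact hμpos.trans (hμmonoA p m hp h le_rfl)
  have hμmono : ∀ p q, 1 ≤ p → p < q → q ≤ m + 1 → μ q < μ p := by
    intro p q hp hpq hq
    rcases Nat.lt_or_ge q (m + 1) with h | h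
    · exact hμmonoA p q hp hpq (by omega)
    · have : q = m + 1 := by omega
      rw [this, hμtop]
      exact hμposAll p hp (by omega)
  have hσposAll : ∀ p, 1 ≤ p → p ≤ m → 0 < σ p := by
    intro p hp hpm
    exact lt_of_le_of_lt hσnn (hσmono p (m + 1) hp (by omega) le_rfl)
  have hμnn : ∀ p, 1 ≤ p → p ≤ m + 1 → 0 ≤ μ p := by
    intro p hp hpm
    rcases Nat.lt_or_ge p (m + 1) with h | h
    · exact (hμposAll p hp (by omega)).le
    · have : p = m + 1 := by omega
      rw [this, hμtop]
  have hσnnAll : ∀ p, 1 ≤ p → p ≤ m + 1 → 0 ≤ σ p := by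
    intro p hp hpm
    rcases Nat.lt_or_ge p (m + 1) with h | h
    · exact (hσposAll p hp (by omega)).le
    · have : p = m + 1 := by omega
      rw [this]; exact hσnn
  intro i j k hi hij hjk hk
  have hjm : j ≤ m := by omega
  have him : i ≤ m := by omega
  have hx : 0 < μ i := hμposAll i hi him
  have hy : 0 < σ i := hσposAll i hi him
  have ha' : 0 ≤ μ k := hμnn k (by omega) hk
  have haa : μ k < μ j := hμmono j k (by omega) hjk hk
  have hax : μ j < μ i := hμmono i j hi hij (by omega)
  have hb' : 0 ≤ σ k := hσnnAll k (by omega) hk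
  have hbb : σ k < σ j := hσmono j k (by omega) hjk hk
  have hby : σ j < σ i := hσmono i j hi hij (by omega)
  have ha : 0 ≤ μ j := ha'.trans haa.le
  have hb : 0 ≤ σ j := hb'.trans hbb.le
  have e1 : vbar m μ σ 0 i j =
      (μ i + μ j) * (σ i + σ j) / (μ i * σ i + μ j * σ j) := by
    rw [vbar, if_neg (by omega), sqrt_zero_aux _ _ hx.le hy.le, sqrt_zero_aux _ _ ha hb]
  have e2 : vbar m μ σ 0 i k =
      (μ i + μ k) * (σ i + σ k) / (μ i * σ i + μ k * σ k) := by
    by_cases hk' : k = m + 1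
    · subst hk'
      rw [vbar, if_pos rfl, sqrt_zero_aux _ _ hx.le hy.le, hμtop]
      ring_nf
    · rw [vbar, if_neg hk', sqrt_zero_aux _ _ hx.le hy.le, sqrt_zero_aux _ _ ha' hb']
  have e3 : vund m μ σ 0 i j =
      (μ i - μ j) * (σ i - σ j) / (μ i * σ i + μ j * σ j) := by
    rw [vund, if_neg (by omega), sqrt_zero_aux _ _ hx.le hy.le, sqrt_zero_aux _ _ ha hb]
  have e4 : vund m μ σ 0 i k =
      (μ i - μ k) * (σ i - σ k) / (μ i * σ i + μ k * σ k) := by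
    by_cases hk' : k = m + 1
    · subst hk'
      rw [vund, if_pos rfl, sqrt_zero_aux _ _ hx.le hy.le, hμtop]
      ring_nf
    · rw [vund, if_neg hk', sqrt_zero_aux _ _ hx.le hy.le, sqrt_zero_aux _ _ ha' hb']
  rw [e1, e2, e3, e4]
  exact core_ineq (μ i) (σ i) (μ j) (σ j) (μ k) (σ k) hx hy ha' haa hax hb' hbb hby
end

section
/- There exists a constant δ̄₁ > 0 such that for all δ ∈ (0, δ̄₁): the maximum of v̄_{ij}(δ) over all pairs 1 ≤ i < j ≤ m+1 equals the maximum of v̄_{i,i+1}(δ) over i ∈ {1,…,m}, and the minimum of v_{ij}(δ) over all pairs 1 ≤ i < j ≤ m+1 equals the minimum of v_{i,i+1}(δ) over i ∈ {1,…,m}. -/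
lemma key_ineq {a b c p q r : ℝ} (hc : 0 ≤ c) (hcb : c < b) (hba : b < a)
    (hr : 0 ≤ r) (hrq : r < q) (hqp : q < p) :
    (a + c) * (p + r) * (a * p + b * q) < (a + b) * (p + q) * (a * p + c * r) ∧
    (a - b) * (p - q) * (a * p + c * r) < (a - c) * (p - r) * (a * p + b * q) := by
  have hb : 0 < b := lt_of_le_of_lt hc hcb
  have ha : 0 < a := hb.trans hba
  have hq : 0 < q := lt_of_le_of_lt hr hrq
  have hp : 0 < p := hq.trans hqp
  have h1 : 0 < p * (q - r) * (a * a - b * c) := by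
    apply mul_pos (mul_pos hp (by linarith)); nlinarith
  have h2 : 0 < a * (p * p - q * r) * (b - c) := by
    apply mul_pos (mul_pos ha (by nlinarith)); linarith
  constructor <;> nlinarith [h1, h2]



/-- equation (4.12). There exists `δ̄₁ > 0` such that for all
`δ ∈ (0, δ̄₁)`: the max of `v̄_{ij}(δ)` over pairs `1 ≤ i < j ≤ m+1` equals the max of
`v̄_{i,i+1}(δ)` over `i ∈ [m]`, and the min of `v_{ij}(δ)` over pairs `1 ≤ i < j ≤ m+1`
equals the min of `v_{i,i+1}(δ)` over `i ∈ [m]`. -/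
theorem stmt10 (m : ℕ) (hm : 2 ≤ m) (μ σ : ℕ → ℝ)
    (hμ : ∀ i, 1 ≤ i → i < m → μ (i + 1) < μ i) (hμpos : 0 < μ m)
    (hμtop : μ (m + 1) = 0)
    (hσ : ∀ i, 1 ≤ i → i ≤ m → σ (i + 1) < σ i) (hσnn : 0 ≤ σ (m + 1)) :
    ∃ δbar : ℝ, 0 < δbar ∧ ∀ δ : ℝ, 0 < δ → δ < δbar →
      sSup {x : ℝ | ∃ i j : ℕ, 1 ≤ i ∧ i < j ∧ j ≤ m + 1 ∧ x = vbar m μ σ δ i j} =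
        sSup {x : ℝ | ∃ i : ℕ, 1 ≤ i ∧ i ≤ m ∧ x = vbar m μ σ δ i (i + 1)} ∧
      sInf {x : ℝ | ∃ i j : ℕ, 1 ≤ i ∧ i < j ∧ j ≤ m + 1 ∧ x = vund m μ σ δ i j} =
        sInf {x : ℝ | ∃ i : ℕ, 1 ≤ i ∧ i ≤ m ∧ x = vund m μ σ δ i (i + 1)} := by
  -- step lemmas
  have hμstep : ∀ i, 1 ≤ i → i ≤ m → μ (i + 1) < μ i := by
    intro i h1 h2
    rcases eq_or_lt_of_le h2 with h | h
    · rw [h, hμtop]; exact hμpos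
    · exact hμ i h1 h
  -- strict antitonicity on [1, m+1]
  have hμ' : ∀ i j, 1 ≤ i → i < j → j ≤ m + 1 → μ j < μ i := by
    intro i j h1 hij hj
    induction j with
    | zero => omega
    | succ k ih =>
      rcases Nat.lt_or_ge i k with h | h
      · exact (hμstep k (by omega) (by omega)).trans (ih (by omega) (by omega))
      · have : i = k := by omega
        subst this; exact hμstep i h1 (by omega)
  have hσ' : ∀ i j, 1 ≤ i → i < j → j ≤ m + 1 → σ j < σ i := by
    intro i j h1 hij hj
    induction j with
    | zero => omega
    | succ k ih =>
      rcases Nat.lt_or_ge i k with h | h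
      · exact (hσ k (by omega) (by omega)).trans (ih (by omega) (by omega))
      · have : i = k := by omega
        subst this; exact hσ i h1 (by omega)
  have hμpos' : ∀ i, 1 ≤ i → i ≤ m → 0 < μ i := by
    intro i h1 h2
    rcases eq_or_lt_of_le h2 with h | h
    · rw [h]; exact hμpos
    · exact hμpos.trans (hμ' i m h1 h (by omega))
  have hσpos' : ∀ i, 1 ≤ i → i ≤ m → 0 < σ i := by
    intro i h1 h2
    exact lt_of_le_of_lt hσnn (hσ' i (m + 1) h1 (by omega) le_rfl)
  have hμnn : ∀ j, 1 ≤ j → j ≤ m + 1 → 0 ≤ μ j := by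
    intro j h1 h2
    rcases eq_or_lt_of_le h2 with h | h
    · rw [h, hμtop]
    · exact (hμpos' j h1 (by omega)).le
  have hσnn' : ∀ j, 1 ≤ j → j ≤ m + 1 → 0 ≤ σ j := by
    intro j h1 h2
    rcases eq_or_lt_of_le h2 with h | h
    · rw [h]; exact hσnn
    · exact (hσpos' j h1 (by omega)).le
  -- sqrt at zero
  have sqrt0 : ∀ i, 1 ≤ i → i ≤ m →
      Real.sqrt ((μ i) ^ 2 * (σ i) ^ 2 + 0) = μ i * σ i := by
    intro i h1 h2
    rw [show (μ i) ^ 2 * (σ i) ^ 2 + (0:ℝ) = (μ i * σ i) ^ 2 by ring,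
      Real.sqrt_sq (mul_nonneg (hμpos' i h1 h2).le (hσpos' i h1 h2).le)]
  -- strict inequalities at δ = 0
  have hbar0 : ∀ i j, 1 ≤ i → i + 1 < j → j ≤ m + 1 →
      vbar m μ σ 0 i j < vbar m μ σ 0 i (i + 1) := by
    intro i j h1 h2 h3
    have him : i ≤ m := by omega
    have hi1m : i + 1 ≤ m := by omega
    have ha : 0 < μ i := hμpos' i h1 him
    have hp : 0 < σ i := hσpos' i h1 him
    have hb : 0 < μ (i + 1) := hμpos' (i + 1) (by omega) hi1m
    have hq : 0 < σ (i + 1) := hσpos' (i + 1) (by omega) hi1m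
    have hba : μ (i + 1) < μ i := hμstep i h1 him
    have hqp : σ (i + 1) < σ i := hσ i h1 him
    have hne1 : i + 1 ≠ m + 1 := by omega
    rw [vbar, vbar, if_neg hne1, sqrt0 i h1 him, sqrt0 (i + 1) (by omega) hi1m]
    by_cases hj : j = m + 1
    · subst hj
      rw [if_pos rfl]
      have hcb : σ (m + 1) < σ (i + 1) := hσ' (i + 1) (m + 1) (by omega) (by omega) le_rfl
      have key := (key_ineq (le_refl (0:ℝ)) hb hba hσnn hcb hqp).1
      rw [div_lt_div_iff₀ (by positivity) (by positivity)]
      nlinarith [key]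
    · rw [if_neg hj, sqrt0 j (by omega) (by omega)]
      have hjm : j ≤ m := by omega
      have hc : 0 ≤ μ j := (hμpos' j (by omega) hjm).le
      have hcb : μ j < μ (i + 1) := hμ' (i + 1) j (by omega) (by omega) (by omega)
      have hr : 0 ≤ σ j := (hσpos' j (by omega) hjm).le
      have hrq : σ j < σ (i + 1) := hσ' (i + 1) j (by omega) (by omega) (by omega)
      have key := (key_ineq hc hcb hba hr hrq hqp).1
      rw [div_lt_div_iff₀ (by positivity) (by positivity)]
      nlinarith [key]
  have hund0 : ∀ i j, 1 ≤ i → i + 1 < j → j ≤ m + 1 →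
      vund m μ σ 0 i (i + 1) < vund m μ σ 0 i j := by
    intro i j h1 h2 h3
    have him : i ≤ m := by omega
    have hi1m : i + 1 ≤ m := by omega
    have ha : 0 < μ i := hμpos' i h1 him
    have hp : 0 < σ i := hσpos' i h1 him
    have hb : 0 < μ (i + 1) := hμpos' (i + 1) (by omega) hi1m
    have hq : 0 < σ (i + 1) := hσpos' (i + 1) (by omega) hi1m
    have hba : μ (i + 1) < μ i := hμstep i h1 him
    have hqp : σ (i + 1) < σ i := hσ i h1 him
    have hne1 : i + 1 ≠ m + 1 := by omega
    rw [vund, vund, if_neg hne1, sqrt0 i h1 him, sqrt0 (i + 1) (by omega) hi1m]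
    by_cases hj : j = m + 1
    · subst hj
      rw [if_pos rfl]
      have hcb : σ (m + 1) < σ (i + 1) := hσ' (i + 1) (m + 1) (by omega) (by omega) le_rfl
      have key := (key_ineq (le_refl (0:ℝ)) hb hba hσnn hcb hqp).2
      rw [div_lt_div_iff₀ (by positivity) (by positivity)]
      nlinarith [key]
    · rw [if_neg hj, sqrt0 j (by omega) (by omega)]
      have hjm : j ≤ m := by omega
      have hc : 0 ≤ μ j := (hμpos' j (by omega) hjm).le
      have hcb : μ j < μ (i + 1) := hμ' (i + 1) j (by omega) (by omega) (by omega)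
      have hr : 0 ≤ σ j := (hσpos' j (by omega) hjm).le
      have hrq : σ j < σ (i + 1) := hσ' (i + 1) j (by omega) (by omega) (by omega)
      have key := (key_ineq hc hcb hba hr hrq hqp).2
      rw [div_lt_div_iff₀ (by positivity) (by positivity)]
      nlinarith [key]
  -- continuity
  have sqrt_cont : ∀ k : ℝ, ContinuousAt (fun δ : ℝ => Real.sqrt (k + δ)) 0 := by
    intro k
    exact (Real.continuous_sqrt.comp (continuous_const.add continuous_id)).continuousAt
  have hcont2 : ∀ N k1 k2 : ℝ, 0 < k1 → 0 ≤ k2 →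
      ContinuousAt (fun δ : ℝ => N / (Real.sqrt (k1 + δ) + Real.sqrt (k2 + δ))) 0 := by
    intro N k1 k2 h1 h2
    apply ContinuousAt.div continuousAt_const ((sqrt_cont k1).add (sqrt_cont k2))
    have : 0 < Real.sqrt (k1 + 0) := Real.sqrt_pos.2 (by linarith)
    exact ne_of_gt (add_pos_of_pos_of_nonneg this (Real.sqrt_nonneg _))
  have hcont1 : ∀ N k1 : ℝ, 0 < k1 →
      ContinuousAt (fun δ : ℝ => N / Real.sqrt (k1 + δ)) 0 := by
    intro N k1 h1
    apply ContinuousAt.div continuousAt_const (sqrt_cont k1)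
    exact ne_of_gt (Real.sqrt_pos.2 (by linarith))
  have hk1pos : ∀ i, 1 ≤ i → i ≤ m → 0 < (μ i) ^ 2 * (σ i) ^ 2 := by
    intro i h1 h2
    have := hμpos' i h1 h2; have := hσpos' i h1 h2; positivity
  have hcontbar : ∀ i j, 1 ≤ i → i < j → j ≤ m + 1 →
      ContinuousAt (fun δ => vbar m μ σ δ i j) 0 := by
    intro i j h1 h2 h3
    by_cases hj : j = m + 1
    · simp only [vbar, if_pos hj]
      exact hcont1 _ _ (hk1pos i h1 (by omega))
    · simp only [vbar, if_neg hj]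
      exact hcont2 _ _ _ (hk1pos i h1 (by omega)) (by positivity)
  have hcontund : ∀ i j, 1 ≤ i → i < j → j ≤ m + 1 →
      ContinuousAt (fun δ => vund m μ σ δ i j) 0 := by
    intro i j h1 h2 h3
    by_cases hj : j = m + 1
    · simp only [vund, if_pos hj]
      exact hcont1 _ _ (hk1pos i h1 (by omega))
    · simp only [vund, if_neg hj]
      exact hcont2 _ _ _ (hk1pos i h1 (by omega)) (by positivity)
  -- eventually near 0
  have hev : ∀ᶠ δ in nhds (0:ℝ), ∀ p ∈ Finset.range (m + 2) ×ˢ Finset.range (m + 2),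
      1 ≤ p.1 → p.1 + 1 < p.2 → p.2 ≤ m + 1 →
      vbar m μ σ δ p.1 p.2 < vbar m μ σ δ p.1 (p.1 + 1) ∧
      vund m μ σ δ p.1 (p.1 + 1) < vund m μ σ δ p.1 p.2 := by
    rw [Filter.eventually_all_finset]
    intro p _
    by_cases h : 1 ≤ p.1 ∧ p.1 + 1 < p.2 ∧ p.2 ≤ m + 1
    · obtain ⟨h1, h2, h3⟩ := h
      have e1 := (hcontbar p.1 p.2 h1 (by omega) h3).eventually_lt
        (hcontbar p.1 (p.1 + 1) h1 (by omega) (by omega)) (hbar0 p.1 p.2 h1 h2 h3)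
      have e2 := (hcontund p.1 (p.1 + 1) h1 (by omega) (by omega)).eventually_lt
        (hcontund p.1 p.2 h1 (by omega) h3) (hund0 p.1 p.2 h1 h2 h3)
      filter_upwards [e1, e2] with δ ha hb
      exact fun _ _ _ => ⟨ha, hb⟩
    · filter_upwards with δ h1 h2 h3
      exact absurd ⟨h1, h2, h3⟩ h
  rw [Metric.eventually_nhds_iff] at hev
  obtain ⟨ε, hε, hP⟩ := hev
  refine ⟨ε, hε, fun δ hδ0 hδε => ?_⟩
  have hdist : dist δ 0 < ε := by
    rw [Real.dist_eq, sub_zero, abs_of_pos hδ0]; exact hδε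
  have hPδ : ∀ i j, 1 ≤ i → i + 1 < j → j ≤ m + 1 →
      vbar m μ σ δ i j < vbar m μ σ δ i (i + 1) ∧
      vund m μ σ δ i (i + 1) < vund m μ σ δ i j := by
    intro i j h1 h2 h3
    exact hP hdist (i, j) (by simp only [Finset.mem_product, Finset.mem_range]; omega) h1 h2 h3
  -- set bookkeeping
  set Sb := {x : ℝ | ∃ i j : ℕ, 1 ≤ i ∧ i < j ∧ j ≤ m + 1 ∧ x = vbar m μ σ δ i j} with hSbdef
  set Tb := {x : ℝ | ∃ i : ℕ, 1 ≤ i ∧ i ≤ m ∧ x = vbar m μ σ δ i (i + 1)} with hTbdef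
  set Su := {x : ℝ | ∃ i j : ℕ, 1 ≤ i ∧ i < j ∧ j ≤ m + 1 ∧ x = vund m μ σ δ i j} with hSudef
  set Tu := {x : ℝ | ∃ i : ℕ, 1 ≤ i ∧ i ≤ m ∧ x = vund m μ σ δ i (i + 1)} with hTudef
  have hSbfin : Sb.Finite := by
    apply Set.Finite.subset (((Finset.range (m + 2) ×ˢ Finset.range (m + 2)).image
      (fun p => vbar m μ σ δ p.1 p.2)).finite_toSet)
    rintro x ⟨i, j, h1, h2, h3, rfl⟩
    simp only [Finset.coe_image, Set.mem_image, Finset.mem_coe, Finset.mem_product,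
      Finset.mem_range]
    exact ⟨(i, j), ⟨by omega, by omega⟩, rfl⟩
  have hSufin : Su.Finite := by
    apply Set.Finite.subset (((Finset.range (m + 2) ×ˢ Finset.range (m + 2)).image
      (fun p => vund m μ σ δ p.1 p.2)).finite_toSet)
    rintro x ⟨i, j, h1, h2, h3, rfl⟩
    simp only [Finset.coe_image, Set.mem_image, Finset.mem_coe, Finset.mem_product,
      Finset.mem_range]
    exact ⟨(i, j), ⟨by omega, by omega⟩, rfl⟩
  have hTSb : Tb ⊆ Sb := by
    rintro x ⟨i, h1, h2, rfl⟩
    exact ⟨i, i + 1, h1, by omega, by omega, rfl⟩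
  have hTSu : Tu ⊆ Su := by
    rintro x ⟨i, h1, h2, rfl⟩
    exact ⟨i, i + 1, h1, by omega, by omega, rfl⟩
  have hTbne : Tb.Nonempty := ⟨vbar m μ σ δ 1 (1 + 1), 1, le_refl 1, by omega, rfl⟩
  have hTune : Tu.Nonempty := ⟨vund m μ σ δ 1 (1 + 1), 1, le_refl 1, by omega, rfl⟩
  have hSbne : Sb.Nonempty := hTbne.mono hTSb
  have hSune : Su.Nonempty := hTune.mono hTSu
  have hTbfin : Tb.Finite := hSbfin.subset hTSb
  have hTufin : Tu.Finite := hSufin.subset hTSu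
  constructor
  · apply le_antisymm
    · apply csSup_le hSbne
      rintro x ⟨i, j, h1, h2, h3, rfl⟩
      rcases Nat.lt_or_ge (i + 1) j with hj | hj
      · exact le_of_lt (lt_of_lt_of_le (hPδ i j h1 hj h3).1
          (le_csSup hTbfin.bddAbove ⟨i, h1, by omega, rfl⟩))
      · have : j = i + 1 := by omega
        subst this
        exact le_csSup hTbfin.bddAbove ⟨i, h1, by omega, rfl⟩
    · exact csSup_le_csSup hSbfin.bddAbove hTbne hTSb
  · apply le_antisymm
    · exact csInf_le_csInf hSufin.bddBelow hTune hTSu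
    · apply le_csInf hSune
      rintro x ⟨i, j, h1, h2, h3, rfl⟩
      rcases Nat.lt_or_ge (i + 1) j with hj | hj
      · exact le_of_lt (lt_of_le_of_lt
          (csInf_le hTufin.bddBelow ⟨i, h1, by omega, rfl⟩) (hPδ i j h1 hj h3).2)
      · have : j = i + 1 := by omega
        subst this
        exact csInf_le hTufin.bddBelow ⟨i, h1, by omega, rfl⟩
end

section
/- Let a₁ > a₂ > 0, b₁ > b₂ > 0 and c₁, c₂ > 0 be real numbers with c₁/(a₁ + b₁) = c₂/(a₂ + b₂). Then there exists δ̄ > 0 such that for all δ ∈ (0, δ̄): c₁/(√(a₁² + δ) + √(b₁² + δ)) > c₂/(√(a₂² + δ) + √(b₂² + δ)). -/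
lemma sqrt_shift_lt (a₁ a₂ δ : ℝ) (ha₂ : 0 < a₂) (ha : a₂ < a₁) (hδ : 0 < δ) :
    Real.sqrt (a₁ ^ 2 + δ) - a₁ < Real.sqrt (a₂ ^ 2 + δ) - a₂ := by
  have h1 : Real.sqrt (a₁ ^ 2 + δ) ^ 2 = a₁ ^ 2 + δ := Real.sq_sqrt (by positivity)
  have h2 : Real.sqrt (a₂ ^ 2 + δ) ^ 2 = a₂ ^ 2 + δ := Real.sq_sqrt (by positivity)
  have p1 : a₁ < Real.sqrt (a₁ ^ 2 + δ) := by
    nlinarith [Real.sqrt_nonneg (a₁ ^ 2 + δ)]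
  have p2 : a₂ < Real.sqrt (a₂ ^ 2 + δ) := by
    nlinarith [Real.sqrt_nonneg (a₂ ^ 2 + δ)]
  nlinarith [mul_pos (sub_pos.2 p1) (sub_pos.2 p2)]

lemma sqrt_gt (a δ : ℝ) (ha : 0 < a) (hδ : 0 < δ) : a < Real.sqrt (a ^ 2 + δ) := by
  have h1 : Real.sqrt (a ^ 2 + δ) ^ 2 = a ^ 2 + δ := Real.sq_sqrt (by positivity)
  nlinarith [Real.sqrt_nonneg (a ^ 2 + δ)]

/-- Let `a₁ > a₂ > 0`, `b₁ > b₂ > 0`, `c₁, c₂ > 0` with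
`c₁/(a₁ + b₁) = c₂/(a₂ + b₂)`. Then there exists `δ̄ > 0` such that for all
`δ ∈ (0, δ̄)`: `c₁/(√(a₁² + δ) + √(b₁² + δ)) > c₂/(√(a₂² + δ) + √(b₂² + δ))`. -/
theorem stmt12 (a₁ a₂ b₁ b₂ c₁ c₂ : ℝ)
    (ha : a₂ < a₁) (ha₂ : 0 < a₂) (hb : b₂ < b₁) (hb₂ : 0 < b₂)
    (hc₁ : 0 < c₁) (hc₂ : 0 < c₂)
    (heq : c₁ / (a₁ + b₁) = c₂ / (a₂ + b₂)) :
    ∃ δbar : ℝ, 0 < δbar ∧ ∀ δ : ℝ, 0 < δ → δ < δbar →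
      c₂ / (Real.sqrt (a₂ ^ 2 + δ) + Real.sqrt (b₂ ^ 2 + δ)) <
      c₁ / (Real.sqrt (a₁ ^ 2 + δ) + Real.sqrt (b₁ ^ 2 + δ)) := by
  refine ⟨1, one_pos, fun δ hδ _ => ?_⟩
  have hs₁ : (0:ℝ) < a₁ + b₁ := by linarith
  have hs₂ : (0:ℝ) < a₂ + b₂ := by linarith
  have hcc : c₁ * (a₂ + b₂) = c₂ * (a₁ + b₁) := by
    field_simp at heq; linarith
  have hc : c₂ < c₁ := by nlinarith
  have ga := sqrt_shift_lt a₁ a₂ δ ha₂ ha hδ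
  have gb := sqrt_shift_lt b₁ b₂ δ hb₂ hb hδ
  have pa₁ := sqrt_gt a₁ δ (lt_trans ha₂ ha) hδ
  have pb₁ := sqrt_gt b₁ δ (lt_trans hb₂ hb) hδ
  have pa₂ := sqrt_gt a₂ δ ha₂ hδ
  have pb₂ := sqrt_gt b₂ δ hb₂ hδ
  have d₁ : (0:ℝ) < Real.sqrt (a₁ ^ 2 + δ) + Real.sqrt (b₁ ^ 2 + δ) := by linarith
  have d₂ : (0:ℝ) < Real.sqrt (a₂ ^ 2 + δ) + Real.sqrt (b₂ ^ 2 + δ) := by linarith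
  rw [div_lt_div_iff₀ d₂ d₁]
  nlinarith [mul_lt_mul_of_pos_left (add_lt_add ga gb) hc₂,
    mul_lt_mul_of_pos_right hc (by linarith : (0:ℝ) < (Real.sqrt (a₂ ^ 2 + δ) - a₂) + (Real.sqrt (b₂ ^ 2 + δ) - b₂))]
end

section
/- There exists a constant δ̄ > 0 such that for all δ ∈ (0, δ̄): ( max_{1 ≤ i < j ≤ m+1} v̄_{ij}(δ) ) / ( min_{1 ≤ i < j ≤ m+1} v_{ij}(δ) ) ≤ ( max{ (μ_1 + μ_2)(σ_1 + σ_2)/2, μ_1(σ_1 + σ_{m+1}) } ) / ( min{ min_{1 ≤ i < j ≤ m} (μ_i − μ_j)(σ_i − σ_j)/2, μ_m(σ_m − σ_{m+1}) } ). That is, the condition number of the Riemannian Hessian under the new left-and-right preconditioned metric (given by the explicit formula of Proposition 4.4) is at most the condition number under the left-preconditioned metric (given by the explicit formula of Proposition 4.1), for all sufficiently small regularization parameters δ. -/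
namespace Stmt13

structure Hyp (m : ℕ) (μ σ : ℕ → ℝ) : Prop where
  hm : 2 ≤ m
  hμ : ∀ i, 1 ≤ i → i < m → μ (i + 1) < μ i
  hμpos : 0 < μ m
  hμtop : μ (m + 1) = 0
  hσ : ∀ i, 1 ≤ i → i ≤ m → σ (i + 1) < σ i
  hσnn : 0 ≤ σ (m + 1)

variable {m : ℕ} {μ σ : ℕ → ℝ}

noncomputable def fN (m : ℕ) (μ σ : ℕ → ℝ) (i j : ℕ) : ℝ :=
  if j = m + 1 then 2 * (μ i * (σ i + σ (m + 1))) else (μ i + μ j) * (σ i + σ j)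

noncomputable def fD (m : ℕ) (μ σ : ℕ → ℝ) (i j : ℕ) : ℝ :=
  if j = m + 1 then 2 * (μ i * (σ i - σ (m + 1))) else (μ i - μ j) * (σ i - σ j)

noncomputable def fW (m : ℕ) (μ σ : ℕ → ℝ) (δ : ℝ) (i j : ℕ) : ℝ :=
  if j = m + 1 then 2 * Real.sqrt ((μ i) ^ 2 * (σ i) ^ 2 + δ)
  else Real.sqrt ((μ i) ^ 2 * (σ i) ^ 2 + δ) + Real.sqrt ((μ j) ^ 2 * (σ j) ^ 2 + δ)

lemma vbar_eq (δ : ℝ) (i j : ℕ) :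
    vbar m μ σ δ i j = fN m μ σ i j / fW m μ σ δ i j := by
  unfold vbar fN fW
  split_ifs with h
  · rw [mul_div_mul_left _ _ (two_ne_zero)]
  · rfl

lemma vund_eq (δ : ℝ) (i j : ℕ) :
    vund m μ σ δ i j = fD m μ σ i j / fW m μ σ δ i j := by
  unfold vund fD fW
  split_ifs with h
  · rw [mul_div_mul_left _ _ (two_ne_zero)]
  · rfl

-- monotonicity
lemma mu_anti (H : Hyp m μ σ) : ∀ i j, 1 ≤ i → i ≤ j → j ≤ m → μ j ≤ μ i := by
  intro i j h1 hij hjm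
  induction j with
  | zero => omega
  | succ n ih =>
    rcases Nat.lt_or_ge i (n+1) with h | h
    · have hn : i ≤ n := by omega
      have h2 : μ n ≤ μ i := ih hn (by omega)
      have h3 : μ (n+1) < μ n := H.hμ n (by omega) (by omega)
      linarith
    · have : i = n + 1 := by omega
      simp [this]

lemma mu_pos (H : Hyp m μ σ) : ∀ i, 1 ≤ i → i ≤ m → 0 < μ i := by
  intro i h1 h2
  exact lt_of_lt_of_le H.hμpos (mu_anti H i m h1 h2 le_rfl)

lemma mu_nonneg (H : Hyp m μ σ) : ∀ i, 1 ≤ i → i ≤ m + 1 → 0 ≤ μ i := by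
  intro i h1 h2
  rcases Nat.lt_or_ge i (m+1) with h | h
  · exact le_of_lt (mu_pos H i h1 (by omega))
  · have : i = m + 1 := by omega
    rw [this, H.hμtop]

lemma mu_anti' (H : Hyp m μ σ) : ∀ i j, 1 ≤ i → i ≤ j → j ≤ m + 1 → μ j ≤ μ i := by
  intro i j h1 hij hjm
  rcases Nat.lt_or_ge j (m+1) with h | h
  · exact mu_anti H i j h1 hij (by omega)
  · have hj : j = m + 1 := by omega
    rw [hj, H.hμtop]
    exact mu_nonneg H i h1 (by omega)

lemma mu_lt (H : Hyp m μ σ) : ∀ i j, 1 ≤ i → i < j → j ≤ m + 1 → μ j < μ i := by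
  intro i j h1 hij hjm
  rcases Nat.lt_or_ge j (m+1) with h | h
  · have h2 : μ j ≤ μ (i+1) := mu_anti H (i+1) j (by omega) (by omega) (by omega)
    exact lt_of_le_of_lt h2 (H.hμ i h1 (by omega))
  · have hj : j = m + 1 := by omega
    rw [hj, H.hμtop]
    exact mu_pos H i h1 (by omega)

lemma sigma_anti (H : Hyp m μ σ) : ∀ i j, 1 ≤ i → i ≤ j → j ≤ m + 1 → σ j ≤ σ i := by
  intro i j h1 hij hjm
  induction j with
  | zero => omega
  | succ n ih =>
    rcases Nat.lt_or_ge i (n+1) with h | h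
    · have h2 : σ n ≤ σ i := ih (by omega) (by omega)
      have h3 : σ (n+1) < σ n := H.hσ n (by omega) (by omega)
      linarith
    · have : i = n + 1 := by omega
      simp [this]

lemma sigma_lt (H : Hyp m μ σ) : ∀ i j, 1 ≤ i → i < j → j ≤ m + 1 → σ j < σ i := by
  intro i j h1 hij hjm
  have h2 : σ j ≤ σ (i+1) := sigma_anti H (i+1) j (by omega) (by omega) (by omega)
  exact lt_of_le_of_lt h2 (H.hσ i h1 (by omega))

lemma sigma_pos (H : Hyp m μ σ) : ∀ i, 1 ≤ i → i ≤ m → 0 < σ i := by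
  intro i h1 h2
  have := sigma_lt H i (m+1) h1 (by omega) le_rfl
  linarith [H.hσnn]

lemma sigma_nonneg (H : Hyp m μ σ) : ∀ i, 1 ≤ i → i ≤ m + 1 → 0 ≤ σ i := by
  intro i h1 h2
  rcases Nat.lt_or_ge i (m+1) with h | h
  · exact le_of_lt (sigma_pos H i h1 (by omega))
  · have : i = m + 1 := by omega
    rw [this]; exact H.hσnn

end Stmt13

namespace Stmt13

variable {m : ℕ} {μ σ : ℕ → ℝ}

def Pr (m i j : ℕ) : Prop := 1 ≤ i ∧ i < j ∧ j ≤ m + 1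

instance (m i j : ℕ) : Decidable (Pr m i j) :=
  inferInstanceAs (Decidable (1 ≤ i ∧ i < j ∧ j ≤ m + 1))

lemma sqrt_lb (x δ : ℝ) (hx : 0 ≤ x) (hδ : 0 ≤ δ) : x ≤ Real.sqrt (x^2 + δ) := by
  have h : x^2 ≤ x^2 + δ := by linarith
  calc x = Real.sqrt (x^2) := (Real.sqrt_sq hx).symm
  _ ≤ Real.sqrt (x^2 + δ) := Real.sqrt_le_sqrt h

lemma sqrt_ub (x cm δ : ℝ) (hc : cm ≤ x) (hcm : 0 < cm) (hδ : 0 ≤ δ) :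
    Real.sqrt (x^2 + δ) ≤ x + δ / (2 * cm) := by
  have he : 0 ≤ δ / (2 * cm) := by positivity
  have hb : 0 ≤ x + δ / (2 * cm) := by linarith
  have h2 : 2 * cm * (δ / (2 * cm)) = δ := by field_simp
  have h3 : x^2 + δ ≤ (x + δ / (2 * cm))^2 := by nlinarith [mul_le_mul_of_nonneg_right hc he, sq_nonneg (δ / (2*cm))]
  calc Real.sqrt (x^2 + δ) ≤ Real.sqrt ((x + δ / (2 * cm))^2) := Real.sqrt_le_sqrt h3
  _ = x + δ / (2 * cm) := Real.sqrt_sq hb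

lemma one_le_m (H : Hyp m μ σ) : 1 ≤ m := by have := H.hm; omega

lemma c_lb (H : Hyp m μ σ) (i : ℕ) (h1 : 1 ≤ i) (h2 : i ≤ m) : μ m * σ m ≤ μ i * σ i :=
  mul_le_mul (mu_anti H i m h1 h2 le_rfl) (sigma_anti H i m h1 h2 (by omega))
    (le_of_lt (sigma_pos H m (one_le_m H) le_rfl)) (le_of_lt (mu_pos H i h1 h2))

lemma cm_pos (H : Hyp m μ σ) : 0 < μ m * σ m :=
  mul_pos H.hμpos (sigma_pos H m (one_le_m H) le_rfl)

lemma pr_i_le (h : Pr m i j) : 1 ≤ i ∧ i ≤ m := by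
  obtain ⟨h1, h2, h3⟩ := h
  exact ⟨h1, by omega⟩

lemma fN_pos (H : Hyp m μ σ) {i j : ℕ} (h : Pr m i j) : 0 < fN m μ σ i j := by
  obtain ⟨h1, h2, h3⟩ := h
  have him : i ≤ m := by
    rcases Nat.lt_or_ge i (m+1) with h | h
    · omega
    · omega
  unfold fN
  split_ifs with hj
  · have := mu_pos H i h1 him
    have := sigma_pos H i h1 him
    have := H.hσnn
    positivity
  · have hjm : j ≤ m := by omega
    have := mu_pos H i h1 him
    have := mu_pos H j (by omega) hjm
    have := sigma_pos H i h1 him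
    have := sigma_pos H j (by omega) hjm
    positivity

lemma fD_pos (H : Hyp m μ σ) {i j : ℕ} (h : Pr m i j) : 0 < fD m μ σ i j := by
  obtain ⟨h1, h2, h3⟩ := h
  have him : i ≤ m := by omega
  unfold fD
  split_ifs with hj
  · have h4 : σ (m+1) < σ i := sigma_lt H i (m+1) h1 (by omega) le_rfl
    have := mu_pos H i h1 him
    have h5 : 0 < σ i - σ (m+1) := by linarith
    positivity
  · have hjm : j ≤ m := by omega
    have h4 : μ j < μ i := mu_lt H i j h1 h2 h3
    have h5 : σ j < σ i := sigma_lt H i j h1 h2 h3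
    have h6 : 0 < μ i - μ j := by linarith
    have h7 : 0 < σ i - σ j := by linarith
    positivity

lemma fW_pos {δ : ℝ} (hδ : 0 < δ) (i j : ℕ) : 0 < fW m μ σ δ i j := by
  unfold fW
  have h1 : 0 < Real.sqrt ((μ i)^2 * (σ i)^2 + δ) := Real.sqrt_pos.mpr (by positivity)
  have h2 : 0 < Real.sqrt ((μ j)^2 * (σ j)^2 + δ) := Real.sqrt_pos.mpr (by positivity)
  split_ifs with hj <;> linarith

lemma fW_ge (H : Hyp m μ σ) {i j : ℕ} (h : Pr m i j) {δ : ℝ} (hδ : 0 ≤ δ) :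
    fN m μ σ i j + fD m μ σ i j ≤ 2 * fW m μ σ δ i j := by
  obtain ⟨h1, h2, h3⟩ := h
  have him : i ≤ m := by omega
  have hμi : 0 ≤ μ i := le_of_lt (mu_pos H i h1 him)
  have hσi : 0 ≤ σ i := le_of_lt (sigma_pos H i h1 him)
  have hci : μ i * σ i ≤ Real.sqrt ((μ i)^2 * (σ i)^2 + δ) := by
    have := sqrt_lb (μ i * σ i) δ (by positivity) hδ
    rwa [mul_pow] at this
  unfold fN fD fW
  split_ifs with hj
  · nlinarith
  · have hjm : j ≤ m := by omega
    have hμj : 0 ≤ μ j := le_of_lt (mu_pos H j (by omega) hjm)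
    have hσj : 0 ≤ σ j := le_of_lt (sigma_pos H j (by omega) hjm)
    have hcj : μ j * σ j ≤ Real.sqrt ((μ j)^2 * (σ j)^2 + δ) := by
      have := sqrt_lb (μ j * σ j) δ (by positivity) hδ
      rwa [mul_pow] at this
    nlinarith

lemma fW_le (H : Hyp m μ σ) {i j : ℕ} (h : Pr m i j) {δ : ℝ} (hδ : 0 ≤ δ) :
    2 * fW m μ σ δ i j ≤ (fN m μ σ i j + fD m μ σ i j) + 2 * (δ / (μ m * σ m)) := by
  obtain ⟨h1, h2, h3⟩ := h
  have him : i ≤ m := by omega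
  have hcm : 0 < μ m * σ m := cm_pos H
  have hci : Real.sqrt ((μ i)^2 * (σ i)^2 + δ) ≤ μ i * σ i + δ / (2 * (μ m * σ m)) := by
    have := sqrt_ub (μ i * σ i) (μ m * σ m) δ (c_lb H i h1 him) hcm hδ
    rwa [mul_pow] at this
  have hhalf : δ / (2 * (μ m * σ m)) = (δ / (μ m * σ m)) / 2 := by ring
  unfold fN fD fW
  split_ifs with hj
  · rw [hhalf] at hci; nlinarith
  · have hjm : j ≤ m := by omega
    have hcj : Real.sqrt ((μ j)^2 * (σ j)^2 + δ) ≤ μ j * σ j + δ / (2 * (μ m * σ m)) := by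
      have := sqrt_ub (μ j * σ j) (μ m * σ m) δ (c_lb H j (by omega) hjm) hcm hδ
      rwa [mul_pow] at this
    rw [hhalf] at hci hcj; nlinarith

end Stmt13

namespace Stmt13

variable {m : ℕ} {μ σ : ℕ → ℝ}

noncomputable def Nmx (m : ℕ) (μ σ : ℕ → ℝ) : ℝ :=
  max ((μ 1 + μ 2) * (σ 1 + σ 2) / 2) (μ 1 * (σ 1 + σ (m + 1)))

noncomputable def Dmn (m : ℕ) (μ σ : ℕ → ℝ) : ℝ :=
  min (sInf {x : ℝ | ∃ i j : ℕ, 1 ≤ i ∧ i < j ∧ j ≤ m ∧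
      x = (μ i - μ j) * (σ i - σ j) / 2}) (μ m * (σ m - σ (m + 1)))

lemma SD_finite : ({x : ℝ | ∃ i j : ℕ, 1 ≤ i ∧ i < j ∧ j ≤ m ∧
    x = (μ i - μ j) * (σ i - σ j) / 2}).Finite := by
  apply Set.Finite.subset (Set.Finite.image
    (f := fun p : ℕ × ℕ => (μ p.1 - μ p.2) * (σ p.1 - σ p.2) / 2)
    ((Set.finite_Iic m).prod (Set.finite_Iic m)))
  rintro x ⟨i, j, h1, h2, h3, rfl⟩
  exact ⟨(i, j), ⟨by simpa using by omega, by simpa using h3⟩, rfl⟩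

lemma SD_nonempty (H : Hyp m μ σ) : ({x : ℝ | ∃ i j : ℕ, 1 ≤ i ∧ i < j ∧ j ≤ m ∧
    x = (μ i - μ j) * (σ i - σ j) / 2}).Nonempty :=
  ⟨(μ 1 - μ 2) * (σ 1 - σ 2) / 2, 1, 2, le_rfl, by omega, H.hm, rfl⟩

lemma SD_le (H : Hyp m μ σ) {i j : ℕ} (h1 : 1 ≤ i) (h2 : i < j) (h3 : j ≤ m) :
    sInf {x : ℝ | ∃ i j : ℕ, 1 ≤ i ∧ i < j ∧ j ≤ m ∧
      x = (μ i - μ j) * (σ i - σ j) / 2} ≤ (μ i - μ j) * (σ i - σ j) / 2 := by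
  apply csInf_le
  · refine ⟨0, ?_⟩
    rintro x ⟨a, b, ha, hab, hbm, rfl⟩
    have h4 : μ b < μ a := mu_lt H a b ha hab (by omega)
    have h5 : σ b < σ a := sigma_lt H a b ha hab (by omega)
    nlinarith
  · exact ⟨i, j, h1, h2, h3, rfl⟩

lemma Dmn_pos (H : Hyp m μ σ) : 0 < Dmn m μ σ := by
  unfold Dmn
  apply lt_min
  · have hmem := Set.Nonempty.csInf_mem (SD_nonempty H) SD_finite
    obtain ⟨a, b, ha, hab, hbm, heq⟩ := hmem
    rw [heq]
    have h4 : μ b < μ a := mu_lt H a b ha hab (by omega)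
    have h5 : σ b < σ a := sigma_lt H a b ha hab (by omega)
    nlinarith
  · have h4 : σ (m+1) < σ m := sigma_lt H m (m+1) (one_le_m H) (by omega) le_rfl
    have h5 : 0 < σ m - σ (m+1) := by linarith
    exact mul_pos H.hμpos h5

lemma Dmn_le (H : Hyp m μ σ) {i j : ℕ} (h : Pr m i j) :
    2 * Dmn m μ σ ≤ fD m μ σ i j := by
  obtain ⟨h1, h2, h3⟩ := h
  have him : i ≤ m := by omega
  unfold Dmn fD
  split_ifs with hj
  · have h4 : Dmn m μ σ ≤ μ m * (σ m - σ (m+1)) := min_le_right _ _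
    have h5 : μ m * (σ m - σ (m+1)) ≤ μ i * (σ i - σ (m+1)) := by
      apply mul_le_mul (mu_anti H i m h1 him le_rfl)
      · have := sigma_anti H i m h1 him (by omega); linarith
      · have := sigma_lt H m (m+1) (one_le_m H) (by omega) le_rfl; linarith
      · exact le_of_lt (mu_pos H i h1 him)
    unfold Dmn at h4
    linarith
  · have h4 : Dmn m μ σ ≤ (μ i - μ j) * (σ i - σ j) / 2 :=
      le_trans (min_le_left _ _) (SD_le H h1 h2 (by omega))
    unfold Dmn at h4
    linarith

lemma Nmx_pos (H : Hyp m μ σ) : 0 < Nmx m μ σ := by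
  unfold Nmx
  apply lt_max_of_lt_right
  have h1 := mu_pos H 1 le_rfl (one_le_m H)
  have h2 := sigma_pos H 1 le_rfl (one_le_m H)
  have h3 := H.hσnn
  positivity

lemma Nmx_ge (H : Hyp m μ σ) {i j : ℕ} (h : Pr m i j) :
    fN m μ σ i j ≤ 2 * Nmx m μ σ := by
  obtain ⟨h1, h2, h3⟩ := h
  have him : i ≤ m := by omega
  have h1m := one_le_m H
  unfold fN Nmx
  split_ifs with hj
  · have h5 : μ i * (σ i + σ (m+1)) ≤ μ 1 * (σ 1 + σ (m+1)) := by
      apply mul_le_mul (mu_anti H 1 i le_rfl h1 him)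
      · have := sigma_anti H 1 i le_rfl h1 (by omega); linarith
      · have := sigma_nonneg H i h1 (by omega); have := H.hσnn; linarith
      · exact le_of_lt (mu_pos H 1 le_rfl h1m)
    have h6 : μ 1 * (σ 1 + σ (m+1)) ≤ max ((μ 1 + μ 2) * (σ 1 + σ 2) / 2) (μ 1 * (σ 1 + σ (m+1))) :=
      le_max_right _ _
    linarith
  · have hjm : j ≤ m := by omega
    have h5 : (μ i + μ j) * (σ i + σ j) ≤ (μ 1 + μ 2) * (σ 1 + σ 2) := by
      apply mul_le_mul
      · have ha := mu_anti H 1 i le_rfl h1 him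
        have hb := mu_anti' H 2 j one_le_two (by omega) (by omega)
        linarith
      · have ha := sigma_anti H 1 i le_rfl h1 (by omega)
        have hb := sigma_anti H 2 j one_le_two (by omega) (by omega)
        linarith
      · have := sigma_pos H i h1 him
        have := sigma_pos H j (by omega) hjm
        linarith
      · have ha := mu_pos H 1 le_rfl h1m
        have hb := mu_pos H 2 one_le_two (by omega)
        linarith
    have h6 : (μ 1 + μ 2) * (σ 1 + σ 2) / 2 ≤ max ((μ 1 + μ 2) * (σ 1 + σ 2) / 2) (μ 1 * (σ 1 + σ (m + 1))) :=
      le_max_left _ _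
    linarith

end Stmt13

namespace Stmt13

variable {m : ℕ} {μ σ : ℕ → ℝ}

lemma fN_lt (H : Hyp m μ σ) {i j : ℕ} (h : Pr m i j)
    (hne1 : ¬(i = 1 ∧ j = 2)) (hne2 : ¬(i = 1 ∧ j = m + 1)) :
    fN m μ σ i j < 2 * Nmx m μ σ := by
  obtain ⟨h1, h2, h3⟩ := h
  have him : i ≤ m := by omega
  have h1m := one_le_m H
  unfold fN Nmx
  split_ifs with hj
  · -- j = m+1, so i ≥ 2
    have hi2 : 2 ≤ i := by
      rcases Nat.lt_or_ge i 2 with h | h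
      · exfalso; apply hne2; omega
      · exact h
    have h5 : μ i * (σ i + σ (m+1)) < μ 1 * (σ 1 + σ (m+1)) := by
      apply mul_lt_mul (mu_lt H 1 i le_rfl (by omega) (by omega))
      · have := sigma_anti H 1 i le_rfl h1 (by omega); linarith
      · have := sigma_pos H i h1 him; have := H.hσnn; linarith
      · exact le_of_lt (mu_pos H 1 le_rfl h1m)
    have h6 : μ 1 * (σ 1 + σ (m+1)) ≤ max ((μ 1 + μ 2) * (σ 1 + σ 2) / 2) (μ 1 * (σ 1 + σ (m+1))) :=
      le_max_right _ _
    linarith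
  · have hjm : j ≤ m := by omega
    have hj2 : 2 ≤ j := by omega
    have hσpos : 0 < σ i + σ j := by
      have := sigma_pos H i h1 him
      have := sigma_pos H j (by omega) hjm
      linarith
    have hμ12 : 0 ≤ μ 1 + μ 2 := by
      have := mu_pos H 1 le_rfl h1m
      have := mu_pos H 2 one_le_two H.hm
      linarith
    have h5 : (μ i + μ j) * (σ i + σ j) < (μ 1 + μ 2) * (σ 1 + σ 2) := by
      rcases Nat.lt_or_ge i 2 with hi | hi
      · -- i = 1, j ≥ 3
        have hi1 : i = 1 := by omega
        have hj3 : 3 ≤ j := by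
          rcases Nat.lt_or_ge j 3 with hh | hh
          · exfalso; apply hne1; omega
          · exact hh
        apply mul_lt_mul'
        · have := mu_anti' H 2 j one_le_two hj2 (by omega)
          rw [hi1]; linarith
        · have ha := sigma_lt H 2 j one_le_two (by omega) (by omega)
          rw [hi1]; linarith
        · linarith
        · have := mu_pos H 1 le_rfl h1m
          have := mu_pos H 2 one_le_two H.hm
          linarith
      · -- i ≥ 2
        apply mul_lt_mul
        · have ha := mu_lt H 1 i le_rfl (by omega) (by omega)
          have hb := mu_anti' H 2 j one_le_two hj2 (by omega)
          linarith
        · have ha := sigma_anti H 1 i le_rfl h1 (by omega)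
          have hb := sigma_anti H 2 j one_le_two hj2 (by omega)
          linarith
        · exact hσpos
        · exact hμ12
    have h6 : (μ 1 + μ 2) * (σ 1 + σ 2) / 2 ≤ max ((μ 1 + μ 2) * (σ 1 + σ 2) / 2) (μ 1 * (σ 1 + σ (m + 1))) :=
      le_max_left _ _
    linarith

lemma fD_1mp1_gt (H : Hyp m μ σ) : 2 * Dmn m μ σ < fD m μ σ 1 (m + 1) := by
  have h1m := one_le_m H
  have hd12 : Dmn m μ σ ≤ (μ 1 - μ 2) * (σ 1 - σ 2) / 2 :=
    le_trans (min_le_left _ _) (SD_le H le_rfl (by omega) H.hm)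
  have hμ2 := mu_pos H 2 one_le_two H.hm
  have hμ1 := mu_pos H 1 le_rfl h1m
  have hσ12 : σ 2 < σ 1 := sigma_lt H 1 2 le_rfl (by omega) (by omega)
  have hσ2t : σ (m+1) ≤ σ 2 := sigma_anti H 2 (m+1) one_le_two (by omega) le_rfl
  have key : (μ 1 - μ 2) * (σ 1 - σ 2) < 2 * (μ 1 * (σ 1 - σ (m+1))) := by
    have ha : (μ 1 - μ 2) * (σ 1 - σ 2) < μ 1 * (σ 1 - σ 2) := by nlinarith
    have hb : μ 1 * (σ 1 - σ 2) ≤ μ 1 * (σ 1 - σ (m+1)) := by nlinarith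
    nlinarith
  have : fD m μ σ 1 (m + 1) = 2 * (μ 1 * (σ 1 - σ (m+1))) := by
    unfold fD; rw [if_pos rfl]
  rw [this]
  linarith

lemma attain_eq (H : Hyp m μ σ) {i j : ℕ} (h : Pr m i j)
    (hN : fN m μ σ i j = 2 * Nmx m μ σ) (hD : fD m μ σ i j = 2 * Dmn m μ σ) :
    i = 1 ∧ j = 2 := by
  by_cases h12 : i = 1 ∧ j = 2
  · exact h12
  exfalso
  by_cases h1m : i = 1 ∧ j = m + 1
  · have := fD_1mp1_gt H
    rw [h1m.1, h1m.2] at hD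
    linarith
  · exact absurd hN (ne_of_lt (fN_lt H h h12 h1m))

lemma bracket_nonneg (H : Hyp m μ σ) {i j : ℕ} (h : Pr m i j) :
    fN m μ σ i j * (2 * Dmn m μ σ) ≤ 2 * Nmx m μ σ * fD m μ σ i j := by
  have h1 : fN m μ σ i j ≤ 2 * Nmx m μ σ := Nmx_ge H h
  have h2 : 2 * Dmn m μ σ ≤ fD m μ σ i j := Dmn_le H h
  have h3 : 0 < fN m μ σ i j := fN_pos H h
  have h4 : 0 < Dmn m μ σ := Dmn_pos H
  nlinarith

lemma bracket_eq (H : Hyp m μ σ) {i j : ℕ} (h : Pr m i j)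
    (heq : fN m μ σ i j * (2 * Dmn m μ σ) = 2 * Nmx m μ σ * fD m μ σ i j) :
    i = 1 ∧ j = 2 := by
  have h1 : fN m μ σ i j ≤ 2 * Nmx m μ σ := Nmx_ge H h
  have h2 : 2 * Dmn m μ σ ≤ fD m μ σ i j := Dmn_le H h
  have h3 : 0 < fN m μ σ i j := fN_pos H h
  have h4 : 0 < Dmn m μ σ := Dmn_pos H
  have h5 : 0 < fD m μ σ i j := fD_pos H h
  apply attain_eq H h
  · nlinarith
  · nlinarith

lemma Spos (H : Hyp m μ σ) {i j k l : ℕ} (hp : Pr m i j) (hq : Pr m k l)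
    (hne : ¬(i = k ∧ j = l)) :
    0 < 2 * Nmx m μ σ * fD m μ σ k l * (fN m μ σ i j + fD m μ σ i j)
      - fN m μ σ i j * (2 * Dmn m μ σ) * (fN m μ σ k l + fD m μ σ k l) := by
  have hbp := bracket_nonneg H hp
  have hbq := bracket_nonneg H hq
  have hNp := fN_pos H hp
  have hNq := fN_pos H hq
  have hDp := fD_pos H hp
  have hDq := fD_pos H hq
  rcases lt_or_eq_of_le hbp with hsp | hsp
  · nlinarith
  · rcases lt_or_eq_of_le hbq with hsq | hsq
    · nlinarith
    · exfalso
      have e1 := bracket_eq H hp hsp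
      have e2 := bracket_eq H hq hsq
      exact hne ⟨e1.1.trans e2.1.symm, e1.2.trans e2.2.symm⟩

end Stmt13

namespace Stmt13

variable {m : ℕ} {μ σ : ℕ → ℝ}

noncomputable def gfun (m : ℕ) (μ σ : ℕ → ℝ) (pq : (ℕ × ℕ) × ℕ × ℕ) : ℝ :=
  if Pr m pq.1.1 pq.1.2 ∧ Pr m pq.2.1 pq.2.2 ∧ pq.1 ≠ pq.2 then
    (μ m * σ m) * (2 * Nmx m μ σ * fD m μ σ pq.2.1 pq.2.2 * (fN m μ σ pq.1.1 pq.1.2 + fD m μ σ pq.1.1 pq.1.2)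
      - fN m μ σ pq.1.1 pq.1.2 * (2 * Dmn m μ σ) * (fN m μ σ pq.2.1 pq.2.2 + fD m μ σ pq.2.1 pq.2.2))
      / (4 * fN m μ σ pq.1.1 pq.1.2 * Dmn m μ σ)
  else 1

noncomputable def PP (m : ℕ) : Finset ((ℕ × ℕ) × ℕ × ℕ) :=
  (Finset.range (m + 2) ×ˢ Finset.range (m + 2)) ×ˢ (Finset.range (m + 2) ×ˢ Finset.range (m + 2))

lemma PP_nonempty : (PP m).Nonempty := by
  refine ⟨((0, 0), (0, 0)), ?_⟩
  simp [PP]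

noncomputable def dbar (m : ℕ) (μ σ : ℕ → ℝ) : ℝ :=
  Finset.inf' (PP m) PP_nonempty (gfun m μ σ)

lemma gfun_pos (H : Hyp m μ σ) (pq : (ℕ × ℕ) × ℕ × ℕ) : 0 < gfun m μ σ pq := by
  unfold gfun
  split_ifs with h
  · obtain ⟨hp, hq, hne⟩ := h
    have hS := Spos H hp hq (by
      intro hc
      apply hne
      exact Prod.ext hc.1 hc.2)
    have := fN_pos H hp
    have := Dmn_pos H
    have := cm_pos H
    positivity
  · exact one_pos

lemma dbar_pos (H : Hyp m μ σ) : 0 < dbar m μ σ := by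
  unfold dbar
  rw [Finset.lt_inf'_iff]
  intro pq _
  exact gfun_pos H pq

lemma dbar_le (H : Hyp m μ σ) {i j k l : ℕ} (hp : Pr m i j) (hq : Pr m k l)
    (hne : ¬(i = k ∧ j = l)) :
    dbar m μ σ ≤ (μ m * σ m) * (2 * Nmx m μ σ * fD m μ σ k l * (fN m μ σ i j + fD m μ σ i j)
      - fN m μ σ i j * (2 * Dmn m μ σ) * (fN m μ σ k l + fD m μ σ k l))
      / (4 * fN m μ σ i j * Dmn m μ σ) := by
  have hmem : ((i, j), (k, l)) ∈ PP m := by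
    obtain ⟨hi1, hij, hjm⟩ := hp
    obtain ⟨hk1, hkl, hlm⟩ := hq
    simp only [PP, Finset.mem_product, Finset.mem_range]
    omega
  have h := Finset.inf'_le (gfun m μ σ) hmem
  unfold gfun at h
  rw [if_pos] at h
  · exact h
  · refine ⟨hp, hq, ?_⟩
    intro hc
    apply hne
    exact ⟨congrArg Prod.fst hc, congrArg Prod.snd hc⟩

end Stmt13

namespace Stmt13

variable {m : ℕ} {μ σ : ℕ → ℝ}

lemma main_pair (H : Hyp m μ σ) {δ : ℝ} (hδ0 : 0 < δ) (hδ : δ < dbar m μ σ)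
    {i j k l : ℕ} (hp : Pr m i j) (hq : Pr m k l) :
    vbar m μ σ δ i j * Dmn m μ σ ≤ Nmx m μ σ * vund m μ σ δ k l := by
  rw [vbar_eq, vund_eq]
  have hWp := fW_pos (m := m) (μ := μ) (σ := σ) hδ0 i j
  have hWq := fW_pos (m := m) (μ := μ) (σ := σ) hδ0 k l
  rw [div_mul_eq_mul_div, ← mul_div_assoc, div_le_div_iff₀ hWp hWq]
  -- goal : fN i j * Dmn * fW k l ≤ Nmx * fD k l * fW i j
  by_cases hne : i = k ∧ j = l
  · obtain ⟨rfl, rfl⟩ := hne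
    have hb := bracket_nonneg H hp
    nlinarith [le_of_lt hWp]
  · have hd := dbar_le H hp hq hne
    have hcm := cm_pos H
    have hNp := fN_pos H hp
    have hDq := fD_pos H hq
    have hNmx := Nmx_pos H
    have hDmn := Dmn_pos H
    have hpos4 : (0:ℝ) < 4 * fN m μ σ i j * Dmn m μ σ := by positivity
    have h3 : δ * (4 * fN m μ σ i j * Dmn m μ σ) <
        (μ m * σ m) * (2 * Nmx m μ σ * fD m μ σ k l * (fN m μ σ i j + fD m μ σ i j)
          - fN m μ σ i j * (2 * Dmn m μ σ) * (fN m μ σ k l + fD m μ σ k l)) := by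
      have h := lt_of_lt_of_le hδ hd
      rw [lt_div_iff₀ hpos4] at h
      linarith [h]
    have h3' : 4 * fN m μ σ i j * Dmn m μ σ * (δ / (μ m * σ m)) <
        2 * Nmx m μ σ * fD m μ σ k l * (fN m μ σ i j + fD m μ σ i j)
          - fN m μ σ i j * (2 * Dmn m μ σ) * (fN m μ σ k l + fD m μ σ k l) := by
      have heq : 4 * fN m μ σ i j * Dmn m μ σ * (δ / (μ m * σ m))
          = δ * (4 * fN m μ σ i j * Dmn m μ σ) / (μ m * σ m) := by ring
      rw [heq, div_lt_iff₀ hcm]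
      nlinarith [h3]
    have h1 := fW_ge H hp (le_of_lt hδ0)
    have h2 := fW_le H hq (le_of_lt hδ0)
    have hA : 2 * fN m μ σ i j * Dmn m μ σ * (2 * fW m μ σ δ k l) ≤
        2 * fN m μ σ i j * Dmn m μ σ * ((fN m μ σ k l + fD m μ σ k l) + 2 * (δ / (μ m * σ m))) :=
      mul_le_mul_of_nonneg_left h2 (by positivity)
    have hB : 2 * Nmx m μ σ * fD m μ σ k l * (fN m μ σ i j + fD m μ σ i j) ≤
        2 * Nmx m μ σ * fD m μ σ k l * (2 * fW m μ σ δ i j) :=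
      mul_le_mul_of_nonneg_left h1 (by positivity)
    nlinarith [hA, hB, h3']

end Stmt13

/-- Proposition 4.6. There exists `δ̄ > 0` such that for all
`δ ∈ (0, δ̄)`, the condition number under the new left-and-right preconditioned
metric, `max_{1≤i<j≤m+1} v̄_{ij}(δ) / min_{1≤i<j≤m+1} v_{ij}(δ)`, is at most the
condition number under the left-preconditioned metric,
`max{(μ₁+μ₂)(σ₁+σ₂)/2, μ₁(σ₁+σ_{m+1})} /
 min{min_{1≤i<j≤m} (μ_i−μ_j)(σ_i−σ_j)/2, μ_m(σ_m−σ_{m+1})}`. -/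
theorem stmt13 (m : ℕ) (hm : 2 ≤ m) (μ σ : ℕ → ℝ)
    (hμ : ∀ i, 1 ≤ i → i < m → μ (i + 1) < μ i) (hμpos : 0 < μ m)
    (hμtop : μ (m + 1) = 0)
    (hσ : ∀ i, 1 ≤ i → i ≤ m → σ (i + 1) < σ i) (hσnn : 0 ≤ σ (m + 1)) :
    ∃ δbar : ℝ, 0 < δbar ∧ ∀ δ : ℝ, 0 < δ → δ < δbar →
      sSup {x : ℝ | ∃ i j : ℕ, 1 ≤ i ∧ i < j ∧ j ≤ m + 1 ∧ x = vbar m μ σ δ i j} /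
        sInf {x : ℝ | ∃ i j : ℕ, 1 ≤ i ∧ i < j ∧ j ≤ m + 1 ∧ x = vund m μ σ δ i j} ≤
      max ((μ 1 + μ 2) * (σ 1 + σ 2) / 2) (μ 1 * (σ 1 + σ (m + 1))) /
        min
          (sInf {x : ℝ | ∃ i j : ℕ, 1 ≤ i ∧ i < j ∧ j ≤ m ∧
            x = (μ i - μ j) * (σ i - σ j) / 2})
          (μ m * (σ m - σ (m + 1))) := by
  have H : Stmt13.Hyp m μ σ := ⟨hm, hμ, hμpos, hμtop, hσ, hσnn⟩
  have hNmx := Stmt13.Nmx_pos H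
  have hDmn := Stmt13.Dmn_pos H
  refine ⟨Stmt13.dbar m μ σ, Stmt13.dbar_pos H, ?_⟩
  intro δ hδ0 hδ
  show sSup _ / sInf _ ≤ Stmt13.Nmx m μ σ / Stmt13.Dmn m μ σ
  have hAne : ({x : ℝ | ∃ i j : ℕ, 1 ≤ i ∧ i < j ∧ j ≤ m + 1 ∧
      x = vbar m μ σ δ i j}).Nonempty :=
    ⟨vbar m μ σ δ 1 2, 1, 2, le_rfl, one_lt_two, by omega, rfl⟩
  have hBne : ({x : ℝ | ∃ i j : ℕ, 1 ≤ i ∧ i < j ∧ j ≤ m + 1 ∧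
      x = vund m μ σ δ i j}).Nonempty :=
    ⟨vund m μ σ δ 1 2, 1, 2, le_rfl, one_lt_two, by omega, rfl⟩
  have hkey : ∀ x ∈ {x : ℝ | ∃ i j : ℕ, 1 ≤ i ∧ i < j ∧ j ≤ m + 1 ∧ x = vbar m μ σ δ i j},
      ∀ y ∈ {x : ℝ | ∃ i j : ℕ, 1 ≤ i ∧ i < j ∧ j ≤ m + 1 ∧ x = vund m μ σ δ i j},
      x * Stmt13.Dmn m μ σ ≤ Stmt13.Nmx m μ σ * y := by
    rintro x ⟨i, j, h1, h2, h3, rfl⟩ y ⟨k, l, h4, h5, h6, rfl⟩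
    exact Stmt13.main_pair H hδ0 hδ ⟨h1, h2, h3⟩ ⟨h4, h5, h6⟩
  have hvb12 : 0 < vbar m μ σ δ 1 2 := by
    rw [Stmt13.vbar_eq]
    exact div_pos (Stmt13.fN_pos H ⟨le_rfl, one_lt_two, by omega⟩) (Stmt13.fW_pos hδ0 1 2)
  have hv12mem : vbar m μ σ δ 1 2 ∈ {x : ℝ | ∃ i j : ℕ, 1 ≤ i ∧ i < j ∧ j ≤ m + 1 ∧
      x = vbar m μ σ δ i j} := ⟨1, 2, le_rfl, one_lt_two, by omega, rfl⟩
  have hBlow : vbar m μ σ δ 1 2 * Stmt13.Dmn m μ σ / Stmt13.Nmx m μ σ ≤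
      sInf {x : ℝ | ∃ i j : ℕ, 1 ≤ i ∧ i < j ∧ j ≤ m + 1 ∧ x = vund m μ σ δ i j} := by
    apply le_csInf hBne
    intro b hb
    rw [div_le_iff₀ hNmx]
    have := hkey _ hv12mem b hb
    linarith [this]
  have hBpos : 0 < sInf {x : ℝ | ∃ i j : ℕ, 1 ≤ i ∧ i < j ∧ j ≤ m + 1 ∧
      x = vund m μ σ δ i j} := by
    refine lt_of_lt_of_le ?_ hBlow
    positivity
  have hsup : sSup {x : ℝ | ∃ i j : ℕ, 1 ≤ i ∧ i < j ∧ j ≤ m + 1 ∧ x = vbar m μ σ δ i j} ≤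
      Stmt13.Nmx m μ σ * sInf {x : ℝ | ∃ i j : ℕ, 1 ≤ i ∧ i < j ∧ j ≤ m + 1 ∧
        x = vund m μ σ δ i j} / Stmt13.Dmn m μ σ := by
    apply csSup_le hAne
    intro a ha
    rw [le_div_iff₀ hDmn]
    have hstep : a * Stmt13.Dmn m μ σ / Stmt13.Nmx m μ σ ≤
        sInf {x : ℝ | ∃ i j : ℕ, 1 ≤ i ∧ i < j ∧ j ≤ m + 1 ∧ x = vund m μ σ δ i j} := by
      apply le_csInf hBne
      intro b hb
      rw [div_le_iff₀ hNmx]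
      have := hkey a ha b hb
      linarith [this]
    rw [div_le_iff₀ hNmx] at hstep
    linarith [hstep]
  rw [div_le_div_iff₀ hBpos hDmn]
  rw [le_div_iff₀ hDmn] at hsup
  linarith [hsup]
end

section
/- Let Σ be a d×d real symmetric positive definite matrix, U a d×m real matrix with UᵀΣU = I_m, and M an m×m real symmetric positive definite matrix. Then: (i) for every d×m real matrix η̄ there exists a unique symmetric m×m matrix S satisfying the Lyapunov equation M⁻¹S + SM⁻¹ = UᵀΣη̄ + η̄ᵀΣU; (ii) the matrix ξ := η̄ − U S M⁻¹ satisfies UᵀΣξ + ξᵀΣU = 0 (i.e., ξ lies in the tangent space of the generalized Stiefel manifold at U); (iii) for every d×m real matrix ζ with UᵀΣζ + ζᵀΣU = 0, one has trace((U S M⁻¹)ᵀ Σ ζ M) = 0, i.e., the normal component U S M⁻¹ is orthogonal to every tangent vector with respect to the preconditioned inner product g(ξ, η) := trace(ξᵀ Σ η M). -/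
/-!
For `P = M⁻¹` positive definite the Lyapunov operator `S ↦ P S + S P` is injective:
`tr (Sᴴ (P S + S P)) = tr (Sᴴ P S) + tr (S P Sᴴ)` is a sum of two nonnegative terms, and the
second vanishes only for `S = 0` (factor `P = yᴴ y` with `y` invertible). Being an
endomorphism of a finite-dimensional space it is bijective, and for a Hermitian right-hand side
`Sᴴ` solves the same equation as `S`, so the solution is Hermitian.

With `N = M⁻¹`, the constraint `Uᵀ Σ U = 1` gives `Uᵀ Σ (U S N) + (U S N)ᵀ Σ U = S N + N S`, which
is the Lyapunov equation, so `η̄ - U S N` is tangent. By cyclicity of the trace,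
`tr ((U S N)ᵀ Σ ζ M) = tr (S T)` with `T = Uᵀ Σ ζ`, which is skew-symmetric when `ζ` is tangent,
and the trace of a symmetric times a skew-symmetric matrix is zero.
-/

open Matrix

namespace Matrix

section Lyapunov

open scoped ComplexOrder

variable {𝕜 n : Type*} [RCLike 𝕜] [Fintype n] [DecidableEq n]

def lyapunovMap (P : Matrix n n 𝕜) : Matrix n n 𝕜 →ₗ[𝕜] Matrix n n 𝕜 :=
  LinearMap.mulLeft 𝕜 P + LinearMap.mulRight 𝕜 P

lemma lyapunovMap_apply (P S : Matrix n n 𝕜) : lyapunovMap P S = P * S + S * P := rfl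

lemma lyapunovMap_conjTranspose {P : Matrix n n 𝕜} (hP : P.IsHermitian) (S : Matrix n n 𝕜) :
    lyapunovMap P Sᴴ = (lyapunovMap P S)ᴴ := by
  rw [lyapunovMap_apply, lyapunovMap_apply, conjTranspose_add, conjTranspose_mul,
    conjTranspose_mul, hP.eq, add_comm]

open scoped MatrixOrder in
lemma PosDef.eq_zero_of_trace_mul_mul_conjTranspose_eq_zero {m : Type*} [Fintype m]
    {P : Matrix n n 𝕜} (hP : P.PosDef) {X : Matrix m n 𝕜} (h : (X * P * Xᴴ).trace = 0) :
    X = 0 := by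
  obtain ⟨y, hy, rfl⟩ :=
    CStarAlgebra.isStrictlyPositive_iff_eq_star_mul_self.mp hP.isStrictlyPositive
  have hXy : X * yᴴ = 0 := by
    rw [← trace_mul_conjTranspose_self_eq_zero_iff]
    simpa only [star_eq_conjTranspose, conjTranspose_mul, conjTranspose_conjTranspose,
      Matrix.mul_assoc] using h
  have hdet : IsUnit (yᴴ).det := (isUnit_iff_isUnit_det _).mp hy.star
  simpa [mul_nonsing_inv_cancel_right _ _ hdet] using congrArg (· * (yᴴ)⁻¹) hXy

lemma PosDef.injective_lyapunovMap {P : Matrix n n 𝕜} (hP : P.PosDef) :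
    Function.Injective (lyapunovMap P) := by
  refine (injective_iff_map_eq_zero _).mpr fun S hS => ?_
  have hsum : (Sᴴ * P * S).trace + (S * P * Sᴴ).trace = (Sᴴ * lyapunovMap P S).trace := by
    rw [lyapunovMap_apply, Matrix.mul_add, trace_add, Matrix.mul_assoc, trace_mul_comm Sᴴ (S * P)]
  rw [hS, Matrix.mul_zero, trace_zero] at hsum
  have h₁ := (hP.posSemidef.conjTranspose_mul_mul_same S).trace_nonneg
  have h₂ := (hP.posSemidef.mul_mul_conjTranspose_same S).trace_nonneg
  exact hP.eq_zero_of_trace_mul_mul_conjTranspose_eq_zero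
    ((add_eq_zero_iff_of_nonneg h₁ h₂).mp hsum).2

lemma PosDef.existsUnique_isHermitian_lyapunovMap_eq {P A : Matrix n n 𝕜} (hP : P.PosDef)
    (hA : A.IsHermitian) : ∃! S : Matrix n n 𝕜, S.IsHermitian ∧ lyapunovMap P S = A := by
  have hinj := hP.injective_lyapunovMap
  obtain ⟨S, hS⟩ := LinearMap.injective_iff_surjective.mp hinj A
  refine ⟨S, ⟨hinj ?_, hS⟩, fun S' hS' => hinj (hS'.2.trans hS.symm)⟩
  rw [lyapunovMap_conjTranspose hP.isHermitian, hS]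
  exact hA

end Lyapunov

lemma trace_mul_eq_zero_of_isSymm_of_add_transpose_eq_zero {R n : Type*} [CommRing R]
    [IsAddTorsionFree R] [Fintype n] {S T : Matrix n n R} (hS : S.IsSymm) (hT : T + Tᵀ = 0) :
    (S * T).trace = 0 := by
  rw [← self_eq_neg]
  calc (S * T).trace = (Tᵀ * S).trace := by rw [← trace_transpose, transpose_mul, hS.eq]
    _ = -(S * T).trace := by
      rw [eq_neg_of_add_eq_zero_right hT, neg_mul, trace_neg, trace_mul_comm]

section Stiefel

variable {R d k : Type*} [CommRing R] [Fintype d] {Sig : Matrix d d R} {U : Matrix d k R}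

lemma isSymm_transpose_mul_mul_add_transpose_mul_mul (hSig : Sig.IsSymm) (V : Matrix d k R) :
    (Uᵀ * Sig * V + Vᵀ * Sig * U).IsSymm := by
  rw [IsSymm, transpose_add, transpose_mul, transpose_mul, transpose_mul, transpose_mul,
    transpose_transpose, transpose_transpose, hSig.eq, Matrix.mul_assoc, Matrix.mul_assoc,
    add_comm]

lemma transpose_mul_mul_add_transpose_mul_mul_of_normal [Fintype k] [DecidableEq k]
    (hU : Uᵀ * Sig * U = 1) {S N : Matrix k k R} (hS : S.IsSymm) (hN : N.IsSymm) :
    Uᵀ * Sig * (U * S * N) + (U * S * N)ᵀ * Sig * U = S * N + N * S := by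
  rw [transpose_mul, transpose_mul, hS.eq, hN.eq]
  calc _ = (Uᵀ * Sig * U) * (S * N) + (N * S) * (Uᵀ * Sig * U) := by
        simp only [Matrix.mul_assoc]
    _ = S * N + N * S := by rw [hU, Matrix.one_mul, Matrix.mul_one]

lemma trace_transpose_mul_mul_mul_eq_zero_of_tangent [IsAddTorsionFree R] [Fintype k]
    [DecidableEq k] (hSig : Sig.IsSymm) {M S : Matrix k k R} (hM : M.IsSymm)
    (hMdet : IsUnit M.det)
    (hS : S.IsSymm) {ζ : Matrix d k R} (hζ : Uᵀ * Sig * ζ + ζᵀ * Sig * U = 0) :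
    ((U * S * M⁻¹)ᵀ * Sig * ζ * M).trace = 0 := by
  have hζ' : Uᵀ * Sig * ζ + (Uᵀ * Sig * ζ)ᵀ = 0 := by
    rwa [transpose_mul, transpose_mul, transpose_transpose, hSig.eq, ← Matrix.mul_assoc]
  calc ((U * S * M⁻¹)ᵀ * Sig * ζ * M).trace = (M * M⁻¹ * (S * (Uᵀ * Sig * ζ))).trace := by
        rw [transpose_mul, transpose_mul, transpose_nonsing_inv, hM.eq, hS.eq, trace_mul_comm]
        simp only [Matrix.mul_assoc]
    _ = 0 := by
      rw [mul_nonsing_inv _ hMdet, Matrix.one_mul]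
      exact trace_mul_eq_zero_of_isSymm_of_add_transpose_eq_zero hS hζ'

end Stiefel

end Matrix

/-- Proposition 4.2, matrix level. Let `Sig` be a `d × d` real
symmetric positive definite matrix, `U` a `d × m` matrix with `Uᵀ Sig U = I`, and `M`
an `m × m` symmetric positive definite matrix. Then: (i) for every `d × m` matrix `η̄`
there is a unique symmetric `S` with `M⁻¹S + SM⁻¹ = Uᵀ Sig η̄ + η̄ᵀ Sig U`;
(ii) `ξ := η̄ − U S M⁻¹` satisfies `Uᵀ Sig ξ + ξᵀ Sig U = 0` (it is tangent to the
generalized Stiefel manifold at `U`); (iii) for every tangent `ζ`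
(`Uᵀ Sig ζ + ζᵀ Sig U = 0`), `trace((U S M⁻¹)ᵀ Sig ζ M) = 0`. -/
theorem stmt14 {d m : ℕ} (Sig : Matrix (Fin d) (Fin d) ℝ) (hSig : Sig.PosDef)
    (U : Matrix (Fin d) (Fin m) ℝ) (hU : Uᵀ * Sig * U = 1)
    (M : Matrix (Fin m) (Fin m) ℝ) (hM : M.PosDef) :
    ∀ ηb : Matrix (Fin d) (Fin m) ℝ,
      (∃! S : Matrix (Fin m) (Fin m) ℝ, Sᵀ = S ∧
        M⁻¹ * S + S * M⁻¹ = Uᵀ * Sig * ηb + ηbᵀ * Sig * U) ∧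
      (∀ S : Matrix (Fin m) (Fin m) ℝ, Sᵀ = S →
        M⁻¹ * S + S * M⁻¹ = Uᵀ * Sig * ηb + ηbᵀ * Sig * U →
          (Uᵀ * Sig * (ηb - U * S * M⁻¹) + (ηb - U * S * M⁻¹)ᵀ * Sig * U = 0 ∧
           ∀ ζ : Matrix (Fin d) (Fin m) ℝ, Uᵀ * Sig * ζ + ζᵀ * Sig * U = 0 →
             ((U * S * M⁻¹)ᵀ * Sig * ζ * M).trace = 0)) := by
  intro ηb
  have hSig' : Sig.IsSymm := isHermitian_iff_isSymm.mp hSig.isHermitian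
  have hM' : M.IsSymm := isHermitian_iff_isSymm.mp hM.isHermitian
  have hMinv : M⁻¹.IsSymm := isHermitian_iff_isSymm.mp hM.inv.isHermitian
  refine ⟨?_, fun S hS hLyap => ⟨?_, fun ζ hζ => ?_⟩⟩
  · simpa only [isHermitian_iff_isSymm, IsSymm, lyapunovMap_apply] using
      hM.inv.existsUnique_isHermitian_lyapunovMap_eq
        (isHermitian_iff_isSymm.mpr (isSymm_transpose_mul_mul_add_transpose_mul_mul hSig' ηb))
  · rw [Matrix.mul_sub, transpose_sub, Matrix.sub_mul, Matrix.sub_mul, sub_add_sub_comm,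
      transpose_mul_mul_add_transpose_mul_mul_of_normal hU hS hMinv, ← hLyap, add_comm,
      sub_self]
  · exact trace_transpose_mul_mul_mul_eq_zero_of_tangent hSig' hM'
      ((isUnit_iff_isUnit_det M).mp hM.isUnit) hS hζ
end
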